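/- arXiv:2211.03851 — 7 statements merged into one kernel-verified Lean document; each statement's English description precedes it below -/
import Mathlib

section
/- A partition γ is an r-core (i.e., no box of γ has hook length equal to r) if and only if its r-quotient is the r-tuple of empty partitions. -/
/-
A box of the diagram of the shape of `b` is a pair (a one at `p`, a zero at `q`) with `p < q`:
its row is the number of zeros above `q` and its column the number of ones up to `p`. Each
position of `ℤ` adds one either to the ones up to it or to the zeros above its predecessor, so
`#ones ≤ x - #zeros > x - x` is independent of `x`, and the hook length of that box is `q - p`.
Hence the shape has a hook of length `r` iff some one of `b` is followed `r` places later by a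
zero, i.e. iff some subsequence `j ↦ b (r * j + i)` is not monotone; and a monotone edge
sequence is exactly one with empty shape.
-/

/-- An *edge sequence*: a subset of `ℤ` (given as a predicate, `True` = a `1` and
`False` = a `0`) which is eventually `1` in one direction and eventually `0` in the other,
so that it has only finitely many inversions. -/
def IsEdgeSeq (b : ℤ → Prop) : Prop :=
  (∃ N : ℤ, ∀ i : ℤ, N ≤ i → b i) ∧ (∃ N : ℤ, ∀ i : ℤ, i ≤ N → ¬ b i)

/-- The number of `0`'s of the edge sequence lying above position `j`. -/
noncomputable def numZerosAbove (b : ℤ → Prop) (j : ℤ) : ℕ :=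
  Nat.card {i : ℤ // j < i ∧ ¬ b i}

/-- The shape of an edge sequence, as a weakly decreasing function `ℕ → ℕ` of parts:
the `(k+1)`-st part counts the `1`'s of `b` having at least `k+1` `0`'s beyond them. -/
noncomputable def esShape (b : ℤ → Prop) (k : ℕ) : ℕ :=
  Nat.card {j : ℤ // b j ∧ k + 1 ≤ numZerosAbove b j}

/-- The number of parts of `f` which are `≥ j`, i.e. the `j`-th column of the diagram
of `f` (the `j`-th part of the conjugate partition, `j ≥ 1`). -/
noncomputable def conjCount (f : ℕ → ℕ) (j : ℕ) : ℕ :=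
  Nat.card {i : ℕ // j ≤ f i}

/-- The partition (given by its parts `f 0 ≥ f 1 ≥ ⋯`, indexed from `0`) has a box
of hook length `n`: the box in (0-indexed) row `a` and (1-indexed) column `j`
has hook length `(f a - j) + (conjCount f j - (a+1)) + 1` (arm + leg + 1). -/
def HasHook (f : ℕ → ℕ) (n : ℕ) : Prop :=
  ∃ a j : ℕ, 1 ≤ j ∧ j ≤ f a ∧ (f a - j) + (conjCount f j - (a + 1)) + 1 = n

noncomputable def numOnesUpTo (b : ℤ → Prop) (p : ℤ) : ℕ :=
  Nat.card {i : ℤ // i ≤ p ∧ b i}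

lemma Int.exists_not_sub_one_and {P : ℤ → Prop} {lo hi : ℤ} (hle : lo ≤ hi) (hlo : ¬ P lo)
    (hhi : P hi) : ∃ x, ¬ P (x - 1) ∧ P x := by
  by_contra! h
  exact hlo (Int.leInductionDown (m := hi) (motive := fun n _ => P n) hhi
    (fun n _ hn => not_not.1 fun hn' => h n hn' hn) lo hle)

open Classical in
lemma Int.natCard_sub_one_lt_and (P : ℤ → Prop) (x : ℤ) (hfin : {i | x < i ∧ P i}.Finite) :
    Nat.card {i // x - 1 < i ∧ P i} = Nat.card {i // x < i ∧ P i} + if P x then 1 else 0 := by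
  by_cases hx : P x
  · have hset : {i | x - 1 < i ∧ P i} = insert x {i | x < i ∧ P i} := by
      ext i
      by_cases hi : i = x
      · subst hi; simpa using hx
      · simp only [Set.mem_insert_iff, hi, false_or]
        exact and_congr_left fun _ => by omega
    rw [if_pos hx]
    exact (congrArg Set.ncard hset).trans (Set.ncard_insert_of_notMem (by simp) hfin)
  · rw [if_neg hx, add_zero]
    refine Nat.card_congr (Equiv.subtypeEquivRight fun i => ?_)
    by_cases hi : i = x
    · subst hi; simp [hx]
    · exact and_congr_left fun _ => by omega

open Classical in
lemma Int.natCard_le_and (P : ℤ → Prop) (x : ℤ) (hfin : {i | i ≤ x - 1 ∧ P i}.Finite) :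
    Nat.card {i // i ≤ x ∧ P i} =
      Nat.card {i // i ≤ x - 1 ∧ P i} + if P x then 1 else 0 := by
  by_cases hx : P x
  · have hset : {i | i ≤ x ∧ P i} = insert x {i | i ≤ x - 1 ∧ P i} := by
      ext i
      by_cases hi : i = x
      · subst hi; simpa using hx
      · simp only [Set.mem_insert_iff, hi, false_or]
        exact and_congr_left fun _ => by omega
    rw [if_pos hx]
    exact (congrArg Set.ncard hset).trans (Set.ncard_insert_of_notMem (by simp) hfin)
  · rw [if_neg hx, add_zero]
    refine Nat.card_congr (Equiv.subtypeEquivRight fun i => ?_)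
    by_cases hi : i = x
    · subst hi; simp [hx]
    · exact and_congr_left fun _ => by omega

theorem forall_le_add_iff_monotone_comp_mul_add {β : Type*} [Preorder β] (f : ℤ → β)
    {r : ℕ} (hr : 0 < r) :
    (∀ p, f p ≤ f (p + r)) ↔
      ∀ i : ℕ, i < r → Monotone fun j : ℤ => f (r * j + i) := by
  refine ⟨fun h i _ => monotone_int_of_le_succ fun j => ?_, fun h p => ?_⟩
  · simpa [mul_add, add_right_comm] using h (r * j + i)
  · have hr' : (0 : ℤ) < r := by exact_mod_cast hr
    have hmod := Int.emod_nonneg p hr'.ne'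
    have hlt := Int.emod_lt_of_pos p hr'
    have := h (p % r).toNat (by omega) (Int.le_add_one le_rfl : p / r ≤ p / r + 1)
    have hp : (r : ℤ) * (p / r) + ((p % r).toNat : ℕ) = p := by
      rw [Int.toNat_of_nonneg hmod]; exact Int.mul_ediv_add_emod p r
    dsimp only at this
    rwa [mul_add, mul_one, add_right_comm _ (r : ℤ), hp] at this

namespace IsEdgeSeq

variable {b : ℤ → Prop} (hb : IsEdgeSeq b)
include hb

lemma finite_zeros_above (j : ℤ) : {i | j < i ∧ ¬ b i}.Finite := by
  obtain ⟨⟨N, hN⟩, -⟩ := hb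
  exact (Set.finite_Ioo j N).subset fun i ⟨hji, hi⟩ => ⟨hji, not_le.1 fun h => hi (hN i h)⟩

lemma finite_ones_le (p : ℤ) : {i | i ≤ p ∧ b i}.Finite := by
  obtain ⟨-, ⟨N, hN⟩⟩ := hb
  exact (Set.finite_Ioc N p).subset fun i ⟨hip, hi⟩ => ⟨not_le.1 fun h => hN i h hi, hip⟩

lemma numZerosAbove_sub_one_of_neg (x : ℤ) (hx : ¬ b x) :
    numZerosAbove b (x - 1) = numZerosAbove b x + 1 :=
  (Int.natCard_sub_one_lt_and (¬ b ·) x (hb.finite_zeros_above x)).trans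
    (by rw [if_pos hx]; rfl)

lemma numZerosAbove_sub_one_of_pos (x : ℤ) (hx : b x) :
    numZerosAbove b (x - 1) = numZerosAbove b x :=
  (Int.natCard_sub_one_lt_and (¬ b ·) x (hb.finite_zeros_above x)).trans
    (by rw [if_neg (not_not.2 hx), add_zero]; rfl)

lemma numOnesUpTo_of_pos (x : ℤ) (hx : b x) :
    numOnesUpTo b x = numOnesUpTo b (x - 1) + 1 :=
  (Int.natCard_le_and b x (hb.finite_ones_le (x - 1))).trans (by rw [if_pos hx]; rfl)

lemma numOnesUpTo_of_neg (x : ℤ) (hx : ¬ b x) :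
    numOnesUpTo b x = numOnesUpTo b (x - 1) :=
  (Int.natCard_le_and b x (hb.finite_ones_le (x - 1))).trans (by rw [if_neg hx, add_zero]; rfl)

lemma antitone_numZerosAbove : Antitone (numZerosAbove b) := by
  refine antitone_int_of_succ_le fun n => ?_
  by_cases h : b (n + 1)
  · simpa using (hb.numZerosAbove_sub_one_of_pos (n + 1) h).ge
  · simpa using (hb.numZerosAbove_sub_one_of_neg (n + 1) h).ge.trans' (Nat.le_succ _)

lemma monotone_numOnesUpTo : Monotone (numOnesUpTo b) := by
  refine monotone_int_of_le_succ fun n => ?_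
  by_cases h : b (n + 1)
  · simpa using (hb.numOnesUpTo_of_pos (n + 1) h).ge.trans' (Nat.le_succ _)
  · simpa using (hb.numOnesUpTo_of_neg (n + 1) h).ge

lemma numOnesUpTo_sub_numZerosAbove_sub_self (x y : ℤ) :
    (numOnesUpTo b y : ℤ) - numZerosAbove b y - y = numOnesUpTo b x - numZerosAbove b x - x := by
  have hstep : ∀ z : ℤ, (numOnesUpTo b (z - 1) : ℤ) - numZerosAbove b (z - 1) - (z - 1)
      = numOnesUpTo b z - numZerosAbove b z - z := by
    intro z
    by_cases hz : b z
    · rw [hb.numOnesUpTo_of_pos z hz, hb.numZerosAbove_sub_one_of_pos z hz]; push_cast; ring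
    · rw [hb.numOnesUpTo_of_neg z hz, hb.numZerosAbove_sub_one_of_neg z hz]; push_cast; ring
  induction y using Int.inductionOn' with
  | b => exact x
  | zero => rfl
  | succ k _ ih => rw [← ih, ← hstep (k + 1), add_sub_cancel_right]
  | pred k _ ih => rw [hstep k, ih]

lemma numZerosAbove_lt_iff {p q : ℤ} (hq : ¬ b q) :
    numZerosAbove b q < numZerosAbove b p ↔ p < q := by
  refine ⟨fun h => not_le.1 fun hqp => h.not_ge (hb.antitone_numZerosAbove hqp), fun hpq => ?_⟩
  have := hb.antitone_numZerosAbove (Int.le_sub_one_of_lt hpq)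
  rw [hb.numZerosAbove_sub_one_of_neg q hq] at this
  omega

lemma numOnesUpTo_le_iff {p q : ℤ} (hp : b p) (hq : ¬ b q) :
    numOnesUpTo b p ≤ numOnesUpTo b q ↔ p < q := by
  refine ⟨fun h => not_le.1 fun hqp => ?_, fun hpq => hb.monotone_numOnesUpTo hpq.le⟩
  have hqp' : q < p := lt_of_le_of_ne hqp fun h => hq (h ▸ hp)
  have := hb.monotone_numOnesUpTo (Int.le_sub_one_of_lt hqp')
  have := hb.numOnesUpTo_of_pos p hp
  omega

lemma exists_numZerosAbove_eq (a : ℕ) : ∃ q, ¬ b q ∧ numZerosAbove b q = a := by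
  have ⟨⟨N₁, hN₁⟩, ⟨N₀, hN₀⟩⟩ := hb
  have hzero : numZerosAbove b (max N₁ (N₀ - a - 1)) = 0 :=
    Nat.card_eq_zero.2 (Or.inl ⟨fun ⟨i, hi, hbi⟩ => hbi (hN₁ i (by omega))⟩)
  have hnone : ∀ x ≤ N₀, numOnesUpTo b x = 0 := fun x hx =>
    Nat.card_eq_zero.2 (Or.inl ⟨fun ⟨i, hi, hbi⟩ => hN₀ i (hi.trans hx) hbi⟩)
  have hlo := hnone (N₀ - a - 1) (by omega)
  have hN₀ := hnone N₀ le_rfl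
  have hcharge := hb.numOnesUpTo_sub_numZerosAbove_sub_self (N₀ - a - 1) N₀
  obtain ⟨q, hq₁, hq⟩ := Int.exists_not_sub_one_and (P := fun x => numZerosAbove b x ≤ a)
    (le_max_right N₁ (N₀ - a - 1)) (by omega) (by simp [hzero])
  by_cases hbq : b q
  · rw [hb.numZerosAbove_sub_one_of_pos q hbq] at hq₁; exact absurd hq hq₁
  · rw [hb.numZerosAbove_sub_one_of_neg q hbq] at hq₁; exact ⟨q, hbq, by omega⟩

lemma exists_numOnesUpTo_eq {j : ℕ} (hj : 0 < j) : ∃ p, b p ∧ numOnesUpTo b p = j := by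
  have ⟨⟨N₁, hN₁⟩, ⟨N₀, hN₀⟩⟩ := hb
  have hzero : ∀ x ≥ max N₀ N₁, numZerosAbove b x = 0 := fun x hx =>
    Nat.card_eq_zero.2 (Or.inl ⟨fun ⟨i, hi, hbi⟩ => hbi (hN₁ i (by omega))⟩)
  have hnone : numOnesUpTo b N₀ = 0 :=
    Nat.card_eq_zero.2 (Or.inl ⟨fun ⟨i, hi, hbi⟩ => hN₀ i hi hbi⟩)
  have hhi := hzero (max N₀ N₁ + j) (by omega)
  have hmid := hzero (max N₀ N₁) le_rfl
  have hcharge := hb.numOnesUpTo_sub_numZerosAbove_sub_self (max N₀ N₁) (max N₀ N₁ + j)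
  obtain ⟨p, hp₁, hp⟩ := Int.exists_not_sub_one_and (P := fun x => j ≤ numOnesUpTo b x)
    (show N₀ ≤ max N₀ N₁ + j by omega) (by simpa [hnone] using hj.ne')
    (show j ≤ _ by omega)
  by_cases hbp : b p
  · have := hb.numOnesUpTo_of_pos p hbp
    exact ⟨p, hbp, by omega⟩
  · rw [hb.numOnesUpTo_of_neg p hbp] at hp; exact absurd hp hp₁

lemma esShape_numZerosAbove {q : ℤ} (hq : ¬ b q) :
    esShape b (numZerosAbove b q) = numOnesUpTo b q :=
  Nat.card_congr <| Equiv.subtypeEquivRight fun j => by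
    by_cases hj : b j
    · have hjq : j ≠ q := fun h => hq (h ▸ hj)
      rw [Nat.add_one_le_iff, hb.numZerosAbove_lt_iff hq]
      simp only [hj, true_and, and_true]
      omega
    · simp [hj]

lemma conjCount_esShape_numOnesUpTo {p : ℤ} (hp : b p) :
    conjCount (esShape b) (numOnesUpTo b p) = numZerosAbove b p := by
  have hiff : ∀ a : ℕ, numOnesUpTo b p ≤ esShape b a ↔ a < numZerosAbove b p := fun a => by
    obtain ⟨q, hq, rfl⟩ := hb.exists_numZerosAbove_eq a
    rw [hb.esShape_numZerosAbove hq, hb.numOnesUpTo_le_iff hp hq, hb.numZerosAbove_lt_iff hq]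
  rw [conjCount, ← Set.ncard_Iio_nat (numZerosAbove b p)]
  exact Nat.card_congr (Equiv.subtypeEquivRight hiff)

lemma hookLength_esShape {p q : ℤ} (hp : b p) (hq : ¬ b q) (hpq : p < q) :
    (((esShape b (numZerosAbove b q) - numOnesUpTo b p)
      + (conjCount (esShape b) (numOnesUpTo b p) - (numZerosAbove b q + 1)) + 1 : ℕ) : ℤ)
      = q - p := by
  rw [hb.esShape_numZerosAbove hq, hb.conjCount_esShape_numOnesUpTo hp]
  have hones := (hb.numOnesUpTo_le_iff hp hq).2 hpq
  have hzeros := (hb.numZerosAbove_lt_iff hq).2 hpq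
  have := hb.numOnesUpTo_sub_numZerosAbove_sub_self p q
  omega

theorem hasHook_esShape_iff {n : ℕ} (hn : 0 < n) :
    HasHook (esShape b) n ↔ ∃ p, b p ∧ ¬ b (p + n) := by
  constructor
  · rintro ⟨a, j, hj, hja, hhook⟩
    obtain ⟨q, hq, rfl⟩ := hb.exists_numZerosAbove_eq a
    obtain ⟨p, hp, rfl⟩ := hb.exists_numOnesUpTo_eq hj
    rw [hb.esShape_numZerosAbove hq] at hja
    have hpq := (hb.numOnesUpTo_le_iff hp hq).1 hja
    have := hb.hookLength_esShape hp hq hpq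
    exact ⟨p, hp, by rwa [show p + n = q by omega]⟩
  · rintro ⟨p, hp, hq⟩
    have hpq : p < p + n := by omega
    refine ⟨numZerosAbove b (p + n), numOnesUpTo b p, ?_, ?_, ?_⟩
    · have := hb.numOnesUpTo_of_pos p hp
      omega
    · rw [hb.esShape_numZerosAbove hq]
      exact (hb.numOnesUpTo_le_iff hp hq).2 hpq
    · have := hb.hookLength_esShape hp hq hpq
      omega

theorem esShape_eq_zero_iff : (∀ k, esShape b k = 0) ↔ Monotone b := by
  refine ⟨fun h x y hxy hx => not_not.1 fun hy => ?_, fun hmono k => ?_⟩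
  · have hy₀ := h (numZerosAbove b y)
    rw [hb.esShape_numZerosAbove hy] at hy₀
    have := hb.monotone_numOnesUpTo hxy
    have := hb.numOnesUpTo_of_pos x hx
    omega
  · refine Nat.card_eq_zero.2 (Or.inl ⟨fun ⟨j, hj, hk⟩ => ?_⟩)
    have : numZerosAbove b j = 0 :=
      Nat.card_eq_zero.2 (Or.inl ⟨fun ⟨i, hji, hi⟩ => hi (hmono hji.le hj)⟩)
    omega

lemma comp_mul_add {r : ℕ} (hr : 0 < r) (i : ℤ) : IsEdgeSeq fun j => b (r * j + i) := by
  obtain ⟨⟨N₁, hN₁⟩, ⟨N₀, hN₀⟩⟩ := hb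
  have hr' : (1 : ℤ) ≤ r := by exact_mod_cast hr
  refine ⟨⟨|N₁| + |i|, fun j hj => hN₁ _ ?_⟩,
    ⟨-(|N₀| + |i|), fun j hj => hN₀ _ ?_⟩⟩
  · nlinarith [le_abs_self N₁, neg_abs_le i, abs_nonneg N₁, abs_nonneg i]
  · nlinarith [neg_abs_le N₀, le_abs_self i, abs_nonneg N₀, abs_nonneg i]

end IsEdgeSeq

/-- A partition `γ` (encoded as the shape of an edge sequence `b`)
is an `r`-core, i.e. has no box of hook length `r`, if and only if its `r`-quotient is
the `r`-tuple of empty partitions, where the `i`-th component of the `r`-quotient is the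
shape of the `i`-th runner `j ↦ b (r*j + i)` of `b`. -/
theorem stmt0 (r : ℕ) (hr : 1 ≤ r) (b : ℤ → Prop) (hb : IsEdgeSeq b) :
    ¬ HasHook (esShape b) r ↔
      ∀ i : ℕ, i < r → ∀ k : ℕ, esShape (fun j : ℤ => b (r * j + (i : ℤ))) k = 0 := by
  have hcore : ¬ HasHook (esShape b) r ↔ ∀ p, b p ≤ b (p + r) := by
    simp only [hb.hasHook_esShape_iff hr, not_exists, not_and, not_not]
    rfl
  rw [hcore, forall_le_add_iff_monotone_comp_mul_add b hr]
  exact forall₂_congr fun i _ => (hb.comp_mul_add hr i).esShape_eq_zero_iff.symm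
end

section
/- The map sending an edge sequence b to the pair (charge(b), shape(b)) is a bijection from the set of edge sequences onto ℤ × (set of partitions). -/
/-- The charge of an edge sequence: the position of the boundary after sorting the
sequence (by repeatedly swapping adjacent inversions) into the fully sorted sequence
with no inversions; normalized so that the sorted sequence consisting of all `1`'s at
positions `≥ m` has charge `-m`. -/
noncomputable def esCharge (b : ℤ → Prop) : ℤ :=
  (Nat.card {i : ℤ // i < 0 ∧ b i} : ℤ) - (Nat.card {i : ℤ // 0 ≤ i ∧ ¬ b i} : ℤ)

/-- A function `ℕ → ℕ` is (the sequence of parts of) a partition: weakly decreasing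
and eventually zero. -/
def IsPartitionFun (f : ℕ → ℕ) : Prop :=
  (∀ i j : ℕ, i ≤ j → f j ≤ f i) ∧ ∃ n : ℕ, ∀ i : ℕ, n ≤ i → f i = 0

noncomputable def esChargeAt (b : ℤ → Prop) (c : ℤ) : ℤ :=
  (Nat.card {i : ℤ // i < c ∧ b i} : ℤ) - (Nat.card {i : ℤ // c ≤ i ∧ ¬ b i} : ℤ)

lemma Nat.card_subtype_eq_add_one {α : Type*} {P Q : α → Prop} {a : α}
    (hPQ : ∀ i, P i ↔ i = a ∨ Q i) (ha : ¬ Q a) (hQ : {i | Q i}.Finite) :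
    Nat.card {i // P i} = Nat.card {i // Q i} + 1 := by
  have hP : {i | P i} = insert a {i | Q i} := Set.ext hPQ
  change Nat.card ({i | P i} : Set α) = Nat.card ({i | Q i} : Set α) + 1
  rw [hP]
  exact Set.ncard_insert_of_notMem ha hQ

variable {b : ℤ → Prop} {z : ℕ → ℤ}

lemma StrictAnti.antitone_add_nat (hz : StrictAnti z) : Antitone fun k => z k + k :=
  antitone_nat_of_succ_le fun k => by have := hz (Nat.lt_add_one k); push_cast; omega

lemma StrictAnti.exists_le (hz : StrictAnti z) (x : ℤ) : ∃ k, z k ≤ x :=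
  ⟨(z 0 - x).toNat, by
    have : z (z 0 - x).toNat + (z 0 - x).toNat ≤ z 0 + (0 : ℕ) :=
      hz.antitone_add_nat (Nat.zero_le _)
    omega⟩

namespace IsEdgeSeq

lemma finite_ones_lt (hb : IsEdgeSeq b) (c : ℤ) : {i | i < c ∧ b i}.Finite := by
  obtain ⟨M, hM⟩ := hb.2
  exact (Set.finite_Ioo M c).subset fun i ⟨hic, hbi⟩ => ⟨not_le.mp fun h => hM i h hbi, hic⟩

lemma finite_zeros_ge (hb : IsEdgeSeq b) (c : ℤ) : {i | c ≤ i ∧ ¬ b i}.Finite := by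
  obtain ⟨N, hN⟩ := hb.1
  exact (Set.finite_Ico c N).subset fun i ⟨hci, hbi⟩ => ⟨hci, not_le.mp fun h => hbi (hN i h)⟩

lemma esChargeAt_add_one (hb : IsEdgeSeq b) (c : ℤ) :
    esChargeAt b (c + 1) = esChargeAt b c + 1 := by
  unfold esChargeAt
  by_cases hc : b c
  · have hones : Nat.card {i // i < c + 1 ∧ b i} = Nat.card {i // i < c ∧ b i} + 1 :=
      Nat.card_subtype_eq_add_one (a := c) (fun i => by grind) (by simp) (hb.finite_ones_lt c)
    have hzeros : Nat.card {i // c ≤ i ∧ ¬ b i} = Nat.card {i // c + 1 ≤ i ∧ ¬ b i} :=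
      Nat.card_congr (Equiv.subtypeEquivRight fun i => by grind)
    rw [hones, hzeros]
    push_cast
    ring
  · have hones : Nat.card {i // i < c + 1 ∧ b i} = Nat.card {i // i < c ∧ b i} :=
      Nat.card_congr (Equiv.subtypeEquivRight fun i => by grind)
    have hzeros : Nat.card {i // c ≤ i ∧ ¬ b i} = Nat.card {i // c + 1 ≤ i ∧ ¬ b i} + 1 :=
      Nat.card_subtype_eq_add_one (a := c) (fun i => by grind) (by simp)
        (hb.finite_zeros_ge (c + 1))
    rw [hones, hzeros]
    push_cast
    ring

lemma esChargeAt_eq (hb : IsEdgeSeq b) (c : ℤ) : esChargeAt b c = esCharge b + c := by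
  induction c using Int.induction_on with
  | zero => simp [esChargeAt, esCharge]
  | succ c ih => rw [hb.esChargeAt_add_one, ih]; ring
  | pred c ih =>
    have h := hb.esChargeAt_add_one (-c - 1)
    rw [sub_add_cancel, ih] at h
    linarith

end IsEdgeSeq

lemma IsEdgeSeq.exists_strictAnti_mem_range_iff (hb : IsEdgeSeq b) :
    ∃ z : ℕ → ℤ, StrictAnti z ∧ ∀ i, i ∈ Set.range z ↔ ¬ b i := by
  obtain ⟨⟨N, hN⟩, ⟨M, hM⟩⟩ := hb
  have hp : {n : ℕ | ¬ b (N - n)}.Infinite := Set.infinite_of_forall_exists_gt fun a =>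
    ⟨max (a + 1) (N - M).toNat, hM _ (by omega), by omega⟩
  refine ⟨fun k => N - Nat.nth (fun n : ℕ => ¬ b (N - n)) k, fun k l hkl => ?_,
    fun i => ⟨?_, fun hi => ?_⟩⟩
  · have := Nat.nth_strictMono hp hkl
    dsimp only
    omega
  · rintro ⟨k, rfl⟩
    exact Nat.nth_mem_of_infinite hp k
  · have hiN : i < N := not_le.mp fun h => hi (hN i h)
    obtain ⟨k, hk⟩ : (N - i).toNat ∈ Set.range (Nat.nth fun n : ℕ => ¬ b (N - n)) := by
      rw [Nat.range_nth_of_infinite hp]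
      show ¬ b (N - (N - i).toNat)
      rwa [Int.toNat_of_nonneg (by omega), sub_sub_cancel]
    exact ⟨k, by simp only [hk]; omega⟩

section Enumeration

variable (hb : IsEdgeSeq b) (hz : StrictAnti z) (hzb : ∀ i, i ∈ Set.range z ↔ ¬ b i)
include hz hzb

lemma card_zeros_ge_apply (k : ℕ) : Nat.card {i : ℤ // z k ≤ i ∧ ¬ b i} = k + 1 := by
  have hzeros : {i | z k ≤ i ∧ ¬ b i} = z '' Set.Iic k := by
    ext i
    constructor
    · rintro ⟨hi, hbi⟩
      obtain ⟨l, rfl⟩ : i ∈ Set.range z := (hzb i).mpr hbi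
      exact ⟨l, hz.le_iff_ge.mp hi, rfl⟩
    · rintro ⟨l, hl, rfl⟩
      exact ⟨hz.antitone hl, (hzb _).mp (Set.mem_range_self l)⟩
  change ({i | z k ≤ i ∧ ¬ b i} : Set ℤ).ncard = k + 1
  rw [hzeros, Set.ncard_image_of_injective _ hz.injective, ← Finset.coe_Iic, Set.ncard_coe_finset,
    Nat.card_Iic]

include hb

lemma le_numZerosAbove_iff (k : ℕ) (j : ℤ) : k + 1 ≤ numZerosAbove b j ↔ j < z k := by
  rw [← card_zeros_ge_apply hz hzb k]
  change ({i | z k ≤ i ∧ ¬ b i} : Set ℤ).ncard ≤ ({i | j < i ∧ ¬ b i} : Set ℤ).ncard ↔ _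
  constructor
  · intro h
    by_contra! hj
    have hsub : {i | j < i ∧ ¬ b i} ⊆ {i | z k ≤ i ∧ ¬ b i} := fun i hi => ⟨by grind, hi.2⟩
    have hss : {i | j < i ∧ ¬ b i} ⊂ {i | z k ≤ i ∧ ¬ b i} :=
      (Set.ssubset_iff_of_subset hsub).mpr
        ⟨z k, ⟨le_rfl, (hzb _).mp (Set.mem_range_self k)⟩, fun h => by grind⟩
    exact (Set.ncard_lt_ncard hss (hb.finite_zeros_ge _)).not_ge h
  · intro hj
    exact Set.ncard_le_ncard (fun i hi => ⟨by grind, hi.2⟩) ((hb.finite_zeros_ge (j + 1)).subset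
      fun i hi => ⟨by grind, hi.2⟩)

lemma esShape_eq_card (k : ℕ) : esShape b k = Nat.card {j : ℤ // j < z k ∧ b j} :=
  Nat.card_congr <| Equiv.subtypeEquivRight fun j => by
    rw [le_numZerosAbove_iff hb hz hzb]; exact and_comm

lemma esShape_eq (k : ℕ) : (esShape b k : ℤ) = esCharge b + z k + k + 1 := by
  have h := hb.esChargeAt_eq (z k)
  rw [esChargeAt, card_zeros_ge_apply hz hzb k, ← esShape_eq_card hb hz hzb k] at h
  push_cast at h
  linarith

lemma esShape_eq_zero {k : ℕ} (hk : ∀ i < z k, ¬ b i) : esShape b k = 0 := by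
  rw [esShape_eq_card hb hz hzb, Nat.card_eq_zero]
  exact Or.inl ⟨fun j => hk j j.2.1 j.2.2⟩

end Enumeration

lemma IsEdgeSeq.isPartitionFun_esShape (hb : IsEdgeSeq b) : IsPartitionFun (esShape b) := by
  obtain ⟨z, hz, hzb⟩ := hb.exists_strictAnti_mem_range_iff
  obtain ⟨M, hM⟩ := hb.2
  refine ⟨fun i j hij => ?_, ?_⟩
  · have : z j + j ≤ z i + i := hz.antitone_add_nat hij
    have := esShape_eq hb hz hzb i
    have := esShape_eq hb hz hzb j
    omega
  · obtain ⟨K, hK⟩ := hz.exists_le M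
    exact ⟨K, fun k hk => esShape_eq_zero hb hz hzb fun i hi => hM i (by grind [hz.antitone hk])⟩

section Inverse

def zerosOf (c : ℤ) (f : ℕ → ℕ) (k : ℕ) : ℤ := (f k : ℤ) - k - 1 - c

def edgeSeqOf (c : ℤ) (f : ℕ → ℕ) (i : ℤ) : Prop := i ∉ Set.range (zerosOf c f)

variable {c : ℤ} {f : ℕ → ℕ}

lemma strictAnti_zerosOf (c : ℤ) (hf : Antitone f) : StrictAnti (zerosOf c f) :=
  strictAnti_nat_of_succ_lt fun k => by
    have := hf (Nat.le_add_right k 1)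
    simp only [zerosOf]
    push_cast
    omega

lemma mem_range_zerosOf {n : ℕ} (hn : ∀ k, n ≤ k → f k = 0) {i : ℤ} (hi : i ≤ -n - 1 - c) :
    i ∈ Set.range (zerosOf c f) := by
  have hk : n ≤ (-i - 1 - c).toNat := by omega
  refine ⟨(-i - 1 - c).toNat, ?_⟩
  simp only [zerosOf, hn _ hk]
  omega

lemma mem_range_zerosOf_iff (i : ℤ) : i ∈ Set.range (zerosOf c f) ↔ ¬ edgeSeqOf c f i := by
  simp [edgeSeqOf]

lemma isEdgeSeq_edgeSeqOf (hf : IsPartitionFun f) : IsEdgeSeq (edgeSeqOf c f) := by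
  obtain ⟨hanti, n, hn⟩ := hf
  refine ⟨⟨zerosOf c f 0 + 1, fun i hi ⟨k, hk⟩ => ?_⟩,
    ⟨-n - 1 - c, fun i hi h => h (mem_range_zerosOf hn hi)⟩⟩
  have := (strictAnti_zerosOf c hanti).antitone k.zero_le
  omega

lemma esCharge_edgeSeqOf (hf : IsPartitionFun f) : esCharge (edgeSeqOf c f) = c := by
  obtain ⟨n, hn⟩ := hf.2
  have hb := isEdgeSeq_edgeSeqOf (c := c) hf
  have hz := strictAnti_zerosOf c hf.1
  have hzero : zerosOf c f n = -n - 1 - c := by simp [zerosOf, hn n le_rfl]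
  have hshape : esShape (edgeSeqOf c f) n = 0 := esShape_eq_zero hb hz mem_range_zerosOf_iff
    fun i hi h => h (mem_range_zerosOf hn (hzero ▸ hi.le))
  have h := esShape_eq hb hz mem_range_zerosOf_iff n
  rw [hshape, hzero] at h
  push_cast at h
  linarith

lemma esShape_edgeSeqOf (hf : IsPartitionFun f) : esShape (edgeSeqOf c f) = f := by
  funext k
  have h := esShape_eq (isEdgeSeq_edgeSeqOf hf) (strictAnti_zerosOf c hf.1) mem_range_zerosOf_iff k
  rw [esCharge_edgeSeqOf hf, zerosOf] at h
  omega

end Inverse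

lemma IsEdgeSeq.edgeSeqOf_esCharge_esShape (hb : IsEdgeSeq b) :
    edgeSeqOf (esCharge b) (esShape b) = b := by
  obtain ⟨z, hz, hzb⟩ := hb.exists_strictAnti_mem_range_iff
  have hzeros : zerosOf (esCharge b) (esShape b) = z := funext fun k => by
    rw [zerosOf, esShape_eq hb hz hzb k]
    ring
  funext i
  simp [edgeSeqOf, hzeros, hzb]

/-- The map sending an edge sequence `b` to the pair
`(charge b, shape b)` is a bijection from the set of edge sequences onto
`ℤ × (set of partitions)`. -/
theorem stmt2 :
    Set.BijOn (fun b : ℤ → Prop => (esCharge b, esShape b))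
      {b : ℤ → Prop | IsEdgeSeq b}
      {p : ℤ × (ℕ → ℕ) | IsPartitionFun p.2} :=
  Set.InvOn.bijOn (f' := fun p => edgeSeqOf p.1 p.2)
    ⟨fun _ hb => hb.edgeSeqOf_esCharge_esShape,
      fun _ hp => Prod.ext (esCharge_edgeSeqOf hp) (esShape_edgeSeqOf hp)⟩
    (fun _ hb => hb.isPartitionFun_esShape) (fun _ hp => isEdgeSeq_edgeSeqOf hp)
end

section
/- Interleaving gives a charge-additive bijection between edge sequences and r-tuples of edge sequences: the map b ↦ (b^0,...,b^{r-1}) with b^i(j) = b(rj+i) is a bijection from edge sequences to r-tuples of edge sequences, and charge(b) = Σ_{i=0}^{r-1} charge(b^i). -/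
variable {α : Type*} {r : ℕ}

theorem natCast_mul_add_fin_neg_iff (s : Fin r) (j : ℤ) :
    (r : ℤ) * j + (s : ℕ) < 0 ↔ j < 0 := by
  have hs : ((s : ℕ) : ℤ) < r := by exact_mod_cast s.isLt
  constructor
  · intro h
    by_contra! hj
    nlinarith
  · intro h
    nlinarith

theorem natCast_mul_add_fin_nonneg_iff (s : Fin r) (j : ℤ) :
    0 ≤ (r : ℤ) * j + (s : ℕ) ↔ 0 ≤ j := by
  simpa only [not_lt] using (natCast_mul_add_fin_neg_iff s j).not

def deinterleave (r : ℕ) (b : ℤ → α) (s : Fin r) (j : ℤ) : α := b (r * j + (s : ℕ))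

theorem deinterleave_neg_and (b : ℤ → Prop) (s : Fin r) :
    deinterleave r (fun i => i < 0 ∧ b i) s = fun j => j < 0 ∧ deinterleave r b s j :=
  funext fun j => by simp only [deinterleave, natCast_mul_add_fin_neg_iff]

theorem deinterleave_nonneg_and_not (b : ℤ → Prop) (s : Fin r) :
    deinterleave r (fun i => 0 ≤ i ∧ ¬ b i) s = fun j => 0 ≤ j ∧ ¬ deinterleave r b s j :=
  funext fun j => by simp only [deinterleave, natCast_mul_add_fin_nonneg_iff]

theorem exists_forall_ge_iff_finite (b : ℤ → Prop) :
    (∃ N, ∀ i, N ≤ i → b i) ↔ Finite {i // 0 ≤ i ∧ ¬ b i} := by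
  constructor
  · rintro ⟨N, hN⟩
    refine Set.Finite.to_subtype ((Set.finite_Ico 0 N).subset fun i ⟨hi, hbi⟩ => ⟨hi, ?_⟩)
    by_contra! h
    exact hbi (hN i h)
  · intro h
    obtain ⟨M, hM⟩ := (Set.finite_coe_iff.mp h).bddAbove
    refine ⟨max (M + 1) 0, fun i hi => ?_⟩
    by_contra hbi
    have := hM ⟨le_of_max_le_right hi, hbi⟩
    omega

theorem exists_forall_le_iff_finite (b : ℤ → Prop) :
    (∃ N, ∀ i, i ≤ N → ¬ b i) ↔ Finite {i // i < 0 ∧ b i} := by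
  constructor
  · rintro ⟨N, hN⟩
    refine Set.Finite.to_subtype ((Set.finite_Ioo N 0).subset fun i ⟨hi, hbi⟩ => ⟨?_, hi⟩)
    by_contra! h
    exact hN i h hbi
  · intro h
    obtain ⟨M, hM⟩ := (Set.finite_coe_iff.mp h).bddBelow
    refine ⟨min (M - 1) (-1), fun i hi hbi => ?_⟩
    have := hM ⟨by omega, hbi⟩
    omega

theorem isEdgeSeq_iff_finite (b : ℤ → Prop) :
    IsEdgeSeq b ↔ Finite {i // i < 0 ∧ b i} ∧ Finite {i // 0 ≤ i ∧ ¬ b i} := by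
  rw [IsEdgeSeq, exists_forall_ge_iff_finite, exists_forall_le_iff_finite, and_comm]

section

variable [NeZero r]

theorem Int.divModEquiv_symm_mk (s : Fin r) (j : ℤ) :
    (Int.divModEquiv r).symm (j, s) = r * j + (s : ℕ) := by
  simp only [Int.divModEquiv_symm_apply, mul_comm]

variable (r) in
def deinterleaveEquiv : (ℤ → α) ≃ (Fin r → ℤ → α) where
  toFun := deinterleave r
  invFun c i := c (Int.divModEquiv r i).2 (Int.divModEquiv r i).1
  left_inv b := funext fun i => by
    simp only [deinterleave, ← Int.divModEquiv_symm_mk, Prod.mk.eta, Equiv.symm_apply_apply]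
  right_inv c := funext₂ fun s j => by
    simp only [deinterleave, ← Int.divModEquiv_symm_mk, Equiv.apply_symm_apply]

variable (r) in
def subtypeEquivSigmaDeinterleave (Q : ℤ → Prop) :
    {i // Q i} ≃ Σ s : Fin r, {j // deinterleave r Q s j} :=
  (((Int.divModEquiv r).trans (Equiv.prodComm _ _)).subtypeEquiv fun i => by
      simp only [deinterleave, Equiv.trans_apply, Equiv.prodComm_apply, Prod.fst_swap,
        Prod.snd_swap, ← Int.divModEquiv_symm_mk, Prod.mk.eta, Equiv.symm_apply_apply]).trans
    (Equiv.subtypeProdEquivSigmaSubtype fun s j => deinterleave r Q s j)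

theorem finite_subtype_iff_forall_deinterleave (Q : ℤ → Prop) :
    Finite {i // Q i} ↔ ∀ s : Fin r, Finite {j // deinterleave r Q s j} := by
  rw [(subtypeEquivSigmaDeinterleave r Q).finite_iff]
  constructor
  · intro _ s
    exact Finite.of_injective (Sigma.mk (β := fun s => {j // deinterleave r Q s j}) s)
      sigma_mk_injective
  · intro _
    infer_instance

theorem natCard_subtype_eq_sum_deinterleave (Q : ℤ → Prop)
    [∀ s : Fin r, Finite {j // deinterleave r Q s j}] :
    Nat.card {i // Q i} = ∑ s : Fin r, Nat.card {j // deinterleave r Q s j} := by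
  rw [Nat.card_congr (subtypeEquivSigmaDeinterleave r Q), Nat.card_sigma]

theorem isEdgeSeq_iff_forall_deinterleave (b : ℤ → Prop) :
    IsEdgeSeq b ↔ ∀ s : Fin r, IsEdgeSeq (deinterleave r b s) := by
  rw [isEdgeSeq_iff_finite,
    finite_subtype_iff_forall_deinterleave (r := r) (fun i => i < 0 ∧ b i),
    finite_subtype_iff_forall_deinterleave (r := r) (fun i => 0 ≤ i ∧ ¬ b i)]
  simp only [deinterleave_neg_and, deinterleave_nonneg_and_not, isEdgeSeq_iff_finite, forall_and]

theorem esCharge_eq_sum_deinterleave {b : ℤ → Prop} (hb : IsEdgeSeq b) :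
    esCharge b = ∑ s : Fin r, esCharge (deinterleave r b s) := by
  have hfin (s : Fin r) := (isEdgeSeq_iff_finite _).1 ((isEdgeSeq_iff_forall_deinterleave b).1 hb s)
  have (s : Fin r) : Finite {j // deinterleave r (fun i => i < 0 ∧ b i) s j} := by
    simpa only [deinterleave_neg_and] using (hfin s).1
  have (s : Fin r) : Finite {j // deinterleave r (fun i => 0 ≤ i ∧ ¬ b i) s j} := by
    simpa only [deinterleave_nonneg_and_not] using (hfin s).2
  rw [esCharge, natCard_subtype_eq_sum_deinterleave (r := r) (fun i => i < 0 ∧ b i),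
    natCard_subtype_eq_sum_deinterleave (r := r) (fun i => 0 ≤ i ∧ ¬ b i)]
  simp only [deinterleave_neg_and, deinterleave_nonneg_and_not, esCharge, Nat.cast_sum,
    Finset.sum_sub_distrib]

end

/-- Interleaving gives a charge-additive bijection between edge
sequences and `r`-tuples of edge sequences: the map `b ↦ (b⁰, …, b^{r-1})` with
`bⁱ j = b (r*j + i)` is a bijection from edge sequences to `r`-tuples of edge
sequences, and `charge b = ∑ i, charge bⁱ`. -/
theorem stmt3 (r : ℕ) (hr : 1 ≤ r) :
    Set.BijOn (fun (b : ℤ → Prop) (s : Fin r) (j : ℤ) => b (r * j + (s : ℕ)))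
      {b : ℤ → Prop | IsEdgeSeq b}
      {c : Fin r → ℤ → Prop | ∀ s : Fin r, IsEdgeSeq (c s)} ∧
    (∀ b : ℤ → Prop, IsEdgeSeq b →
      esCharge b = ∑ s : Fin r, esCharge (fun j : ℤ => b (r * j + (s : ℕ)))) := by
  have : NeZero r := ⟨by omega⟩
  exact ⟨(deinterleaveEquiv r).bijOn fun b => (isEdgeSeq_iff_forall_deinterleave b).symm,
    fun b => esCharge_eq_sum_deinterleave⟩
end

section
/- The r-core of a partition is well-defined: any two maximal sequences of r-ribbon removals starting from the same partition λ terminate at the same r-core partition. -/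
/-- Two boxes (given by (row, column) coordinates) are rookwise adjacent. -/
def AdjBox (x y : ℕ × ℕ) : Prop :=
  (x.1 = y.1 ∧ (x.2 + 1 = y.2 ∨ y.2 + 1 = x.2)) ∨
  (x.2 = y.2 ∧ (x.1 + 1 = y.1 ∨ y.1 + 1 = x.1))

/-- A box `x` belongs to the skew diagram `f / g`. -/
def InSkew (f g : ℕ → ℕ) (x : ℕ × ℕ) : Prop :=
  g x.1 ≤ x.2 ∧ x.2 < f x.1

/-- `g` is obtained from `f` by removing a removable `r`-ribbon: `g` is a partition
contained in `f`, and the skew shape `f/g` consists of exactly `r` boxes, is rookwise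
connected, and has at most one box on each antidiagonal (diagonal of constant content
`column - row`). -/
def RibbonStep (r : ℕ) (f g : ℕ → ℕ) : Prop :=
  IsPartitionFun g ∧ (∀ a : ℕ, g a ≤ f a) ∧
  Nat.card {x : ℕ × ℕ // InSkew f g x} = r ∧
  (∀ x y : ℕ × ℕ, InSkew f g x → InSkew f g y →
    ∃ (n : ℕ) (c : ℕ → ℕ × ℕ), c 0 = x ∧ c n = y ∧
      (∀ m : ℕ, m ≤ n → InSkew f g (c m)) ∧
      (∀ m : ℕ, m < n → AdjBox (c m) (c (m + 1)))) ∧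
  (∀ x y : ℕ × ℕ, InSkew f g x → InSkew f g y →
    ((x.2 : ℤ) - (x.1 : ℤ) = (y.2 : ℤ) - (y.1 : ℤ)) → x = y)

set_option linter.unusedSectionVars false
namespace Stmt5Aux

/-- The beta-number sequence of a partition. -/
def B (f : ℕ → ℕ) (i : ℕ) : ℤ := (f i : ℤ) - i

/-- The beta-set of a partition. -/
def XS (f : ℕ → ℕ) : Set ℤ := Set.range (B f)

lemma B_strictAnti {f : ℕ → ℕ} (hf : IsPartitionFun f) : StrictAnti (B f) := by
  apply strictAnti_nat_of_succ_lt
  intro n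
  have := hf.1 n (n + 1) (by omega)
  simp only [B]
  push_cast
  omega

lemma B_anti {f : ℕ → ℕ} (hf : IsPartitionFun f) {a b : ℕ} (h : a ≤ b) : B f b ≤ B f a :=
  (B_strictAnti hf).antitone h

lemma B_gap {f : ℕ → ℕ} (hf : IsPartitionFun f) {a b : ℕ} (h : a ≤ b) :
    B f b + ((b : ℤ) - a) ≤ B f a := by
  induction b, h using Nat.le_induction with
  | base => simp
  | succ b hab ih =>
    have := (B_strictAnti hf) (show b < b + 1 by omega)
    push_cast
    push_cast at ih
    omega

lemma B_neg {f : ℕ → ℕ} {n : ℕ} (hn : ∀ i, n ≤ i → f i = 0) {i : ℕ} (h : n ≤ i) :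
    B f i = -(i : ℤ) := by
  simp [B, hn i h]

lemma mem_XS_of_le_neg {f : ℕ → ℕ} {n : ℕ} (hn : ∀ i, n ≤ i → f i = 0) {y : ℤ}
    (h : y ≤ -(n : ℤ)) : y ∈ XS f := by
  refine ⟨(-y).toNat, ?_⟩
  have h1 : (0 : ℤ) ≤ -y := by omega
  have h2 : ((-y).toNat : ℤ) = -y := Int.toNat_of_nonneg h1
  have h3 : n ≤ (-y).toNat := by omega
  rw [B_neg hn h3]
  omega

lemma finA {f : ℕ → ℕ} (hf : IsPartitionFun f) (m : ℤ) :
    {y : ℤ | y ∈ XS f ∧ m ≤ y}.Finite := by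
  obtain ⟨n, hn⟩ := hf.2
  set N : ℕ := n + (-m).toNat + 1 with hN
  apply Set.Finite.subset ((Set.finite_Iio N).image (B f))
  rintro y ⟨⟨k, rfl⟩, hm⟩
  refine ⟨k, ?_, rfl⟩
  by_contra hk
  simp only [Set.mem_Iio, not_lt] at hk
  have h1 : B f k = -(k : ℤ) := B_neg hn (by omega)
  have h2 : ((-m).toNat : ℤ) ≥ -m := Int.self_le_toNat _
  omega

lemma finC {f : ℕ → ℕ} (hf : IsPartitionFun f) (m : ℤ) :
    {y : ℤ | y < m ∧ y ∉ XS f}.Finite := by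
  obtain ⟨n, hn⟩ := hf.2
  apply Set.Finite.subset (Set.finite_Ioo (-(n : ℤ) - 1) m)
  rintro y ⟨hy, hyX⟩
  refine ⟨?_, hy⟩
  by_contra hc
  push_neg at hc
  exact hyX (mem_XS_of_le_neg hn (by omega))

lemma XS_inj {f g : ℕ → ℕ} (hf : IsPartitionFun f) (hg : IsPartitionFun g)
    (h : XS f = XS g) : f = g := by
  have key : ∀ i, B f i = B g i := by
    intro i
    induction i using Nat.strong_induction_on with
    | _ i ih =>
      have h1 : B f i ∈ XS g := h ▸ ⟨i, rfl⟩
      have h2 : B g i ∈ XS f := h.symm ▸ ⟨i, rfl⟩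
      obtain ⟨k, hk⟩ := h1
      obtain ⟨l, hl⟩ := h2
      have hki : i ≤ k := by
        by_contra hc
        push_neg at hc
        have := ih k hc
        have := (B_strictAnti hf) hc
        omega
      have hli : i ≤ l := by
        by_contra hc
        push_neg at hc
        have := ih l hc
        have := (B_strictAnti hg) hc
        omega
      have h3 : B g k ≤ B g i := B_anti hg hki
      have h4 : B f l ≤ B f i := B_anti hf hli
      omega
  funext i
  have := key i
  simp only [B] at this
  omega



/-! ## Shared structure of a ribbon skew shape -/

/-- The content of a box. -/
def ct (x : ℕ × ℕ) : ℤ := (x.2 : ℤ) - x.1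

/-- The row containing the box of content `t`. -/
def rowOf (f : ℕ → ℕ) (i j : ℕ) (t : ℤ) : ℕ :=
  Nat.findGreatest (fun k => i ≤ k ∧ t < B f k) j

/-- The box of content `t`. -/
def boxOf (f : ℕ → ℕ) (i j : ℕ) (t : ℤ) : ℕ × ℕ :=
  (rowOf f i j t, (t + rowOf f i j t).toNat)

section Shared

variable {f g : ℕ → ℕ} {i j : ℕ}

lemma Bg_eq (h3 : ∀ k, i ≤ k → k < j → g k + 1 = f (k + 1)) :
    ∀ k, i ≤ k → k < j → B g k = B f (k + 1) := by
  intro k hk hk'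
  have := h3 k hk hk'
  simp only [B]
  push_cast
  omega

lemma skew_row_bounds (h1 : ∀ k, k < i → g k = f k) (h2 : ∀ k, j < k → g k = f k)
    {x : ℕ × ℕ} (hx : InSkew f g x) :
    i ≤ x.1 ∧ x.1 ≤ j ∧ B g x.1 ≤ ct x ∧ ct x < B f x.1 := by
  obtain ⟨ha, hb⟩ := hx
  have hi : i ≤ x.1 := by
    by_contra hc
    push_neg at hc
    rw [h1 x.1 hc] at ha
    omega
  have hj : x.1 ≤ j := by
    by_contra hc
    push_neg at hc
    rw [h2 x.1 hc] at ha
    omega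
  refine ⟨hi, hj, ?_, ?_⟩ <;> simp only [B, ct] <;> omega

lemma row_disjoint (hf : IsPartitionFun f)
    (h3 : ∀ k, i ≤ k → k < j → g k + 1 = f (k + 1)) :
    ∀ k k', i ≤ k → k < k' → k' ≤ j → B f k' ≤ B g k := by
  intro k k' hik hkk' hk'j
  rw [Bg_eq h3 k hik (by omega)]
  exact B_anti hf (by omega)

lemma row_unique (hf : IsPartitionFun f)
    (h3 : ∀ k, i ≤ k → k < j → g k + 1 = f (k + 1))
    {k k' : ℕ} {t : ℤ} (hk : i ≤ k) (hkj : k ≤ j) (hk' : i ≤ k') (hk'j : k' ≤ j)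
    (ha : B g k ≤ t) (hb : t < B f k) (ha' : B g k' ≤ t) (hb' : t < B f k') : k = k' := by
  rcases lt_trichotomy k k' with h | h | h
  · have := row_disjoint hf h3 k k' hk h hk'j
    omega
  · exact h
  · have := row_disjoint hf h3 k' k hk' h hkj
    omega

variable (hf : IsPartitionFun f) (hg : IsPartitionFun g) (hij : i ≤ j)
  (h1 : ∀ k, k < i → g k = f k) (h2 : ∀ k, j < k → g k = f k)
  (h3 : ∀ k, i ≤ k → k < j → g k + 1 = f (k + 1))
  (h4 : ∀ k, i ≤ k → k ≤ j → g k < f k)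

include hf hg hij h1 h2 h3 h4

lemma rowOf_facts {t : ℤ} (ht1 : B g j ≤ t) (ht2 : t < B f i) :
    i ≤ rowOf f i j t ∧ rowOf f i j t ≤ j ∧
      B g (rowOf f i j t) ≤ t ∧ t < B f (rowOf f i j t) := by
  have hPi : i ≤ i ∧ t < B f i := ⟨le_refl i, ht2⟩
  have hge : i ≤ rowOf f i j t := Nat.le_findGreatest hij hPi
  have hle : rowOf f i j t ≤ j := Nat.findGreatest_le j
  have hspec := Nat.findGreatest_spec (P := fun k => i ≤ k ∧ t < B f k) hij hPi
  refine ⟨hge, hle, ?_, hspec.2⟩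
  rcases eq_or_lt_of_le hle with heq | hlt
  · rw [heq]; exact ht1
  · have hng := Nat.findGreatest_is_greatest (P := fun k => i ≤ k ∧ t < B f k)
      (n := j) (Nat.lt_succ_self _) hlt
    simp only [not_and, not_lt] at hng
    have : B f (rowOf f i j t + 1) ≤ t := hng (by omega)
    rw [Bg_eq h3 _ hge hlt]
    exact this

lemma boxOf_col {t : ℤ} (ht1 : B g j ≤ t) (ht2 : t < B f i) :
    (((t + rowOf f i j t).toNat : ℤ)) = t + rowOf f i j t := by
  obtain ⟨hge, hle, hlo, hhi⟩ := rowOf_facts hf hg hij h1 h2 h3 h4 ht1 ht2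
  have : (0 : ℤ) ≤ t + rowOf f i j t := by
    simp only [B] at hlo
    omega
  exact Int.toNat_of_nonneg this

lemma boxOf_mem {t : ℤ} (ht1 : B g j ≤ t) (ht2 : t < B f i) :
    InSkew f g (boxOf f i j t) := by
  obtain ⟨hge, hle, hlo, hhi⟩ := rowOf_facts hf hg hij h1 h2 h3 h4 ht1 ht2
  have hcol := boxOf_col hf hg hij h1 h2 h3 h4 ht1 ht2
  simp only [B] at hlo hhi
  constructor <;> simp only [boxOf] <;> omega

lemma boxOf_ct {t : ℤ} (ht1 : B g j ≤ t) (ht2 : t < B f i) :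
    ct (boxOf f i j t) = t := by
  have hcol := boxOf_col hf hg hij h1 h2 h3 h4 ht1 ht2
  simp only [ct, boxOf]
  omega

lemma ct_range {x : ℕ × ℕ} (hx : InSkew f g x) : B g j ≤ ct x ∧ ct x < B f i := by
  obtain ⟨hi, hj, hlo, hhi⟩ := skew_row_bounds h1 h2 hx
  exact ⟨le_trans (B_anti hg hj) hlo, lt_of_lt_of_le hhi (B_anti hf hi)⟩

lemma boxOf_eq_self {x : ℕ × ℕ} (hx : InSkew f g x) : boxOf f i j (ct x) = x := by
  obtain ⟨hi, hj, hlo, hhi⟩ := skew_row_bounds h1 h2 hx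
  obtain ⟨ht1, ht2⟩ := ct_range hf hg hij h1 h2 h3 h4 hx
  obtain ⟨hge, hle, hlo', hhi'⟩ := rowOf_facts hf hg hij h1 h2 h3 h4 ht1 ht2
  have hrow : rowOf f i j (ct x) = x.1 :=
    row_unique hf h3 hge hle hi hj hlo' hhi' hlo hhi
  have hcol := boxOf_col hf hg hij h1 h2 h3 h4 ht1 ht2
  rw [hrow] at hcol
  simp only [boxOf, hrow]
  refine Prod.ext rfl ?_
  have hct : ct x = (x.2 : ℤ) - x.1 := rfl
  omega

lemma ct_inj {x y : ℕ × ℕ} (hx : InSkew f g x) (hy : InSkew f g y)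
    (h : ct x = ct y) : x = y := by
  rw [← boxOf_eq_self hf hg hij h1 h2 h3 h4 hx, ← boxOf_eq_self hf hg hij h1 h2 h3 h4 hy, h]

lemma card_skew : Nat.card {x : ℕ × ℕ // InSkew f g x} = (B f i - B g j).toNat := by
  have e : {x : ℕ × ℕ // InSkew f g x} ≃ (Set.Ico (B g j) (B f i) : Set ℤ) :=
    { toFun := fun x => ⟨ct x.1, Set.mem_Ico.2 (ct_range hf hg hij h1 h2 h3 h4 x.2)⟩
      invFun := fun t => ⟨boxOf f i j t.1,
        boxOf_mem hf hg hij h1 h2 h3 h4 (Set.mem_Ico.1 t.2).1 (Set.mem_Ico.1 t.2).2⟩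
      left_inv := fun x => Subtype.ext (boxOf_eq_self hf hg hij h1 h2 h3 h4 x.2)
      right_inv := fun t => Subtype.ext
        (boxOf_ct hf hg hij h1 h2 h3 h4 (Set.mem_Ico.1 t.2).1 (Set.mem_Ico.1 t.2).2) }
  rw [Nat.card_congr e, Nat.card_coe_set_eq, ← Finset.coe_Ico, Set.ncard_coe_finset,
    Int.card_Ico]

lemma adj_step {t : ℤ} (ht1 : B g j ≤ t) (ht2 : t + 1 < B f i) :
    AdjBox (boxOf f i j t) (boxOf f i j (t + 1)) := by
  have ht2' : t < B f i := by omega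
  have hs1 : B g j ≤ t + 1 := by omega
  obtain ⟨hge, hle, hlo, hhi⟩ := rowOf_facts hf hg hij h1 h2 h3 h4 ht1 ht2'
  obtain ⟨hge', hle', hlo', hhi'⟩ := rowOf_facts hf hg hij h1 h2 h3 h4 hs1 ht2
  have hcol := boxOf_col hf hg hij h1 h2 h3 h4 ht1 ht2'
  have hcol' := boxOf_col hf hg hij h1 h2 h3 h4 hs1 ht2
  set k := rowOf f i j t with hk
  set k' := rowOf f i j (t + 1) with hk'
  by_cases hkk : k' = k
  · left
    simp only [boxOf, ← hk, ← hk', hkk]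
    refine ⟨by simp, Or.inl ?_⟩
    rw [hkk] at hcol'
    omega
  · have hfk : t + 1 = B f k := by
      by_contra hc
      have hc' : t + 1 < B f k := by omega
      exact hkk (row_unique hf h3 hge' hle' hge hle hlo' hhi' (by omega) hc')
    have hik : i < k := by
      rcases eq_or_lt_of_le hge with heq | hlt
      · exfalso; rw [← heq] at hfk; omega
      · exact hlt
    have hk1j : k - 1 < j := by omega
    have hik1 : i ≤ k - 1 := by omega
    have hbg : B g (k - 1) = B f k := by
      have := Bg_eq h3 (k - 1) hik1 hk1j
      rwa [Nat.sub_add_cancel (by omega)] at this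
    have hfk1 : t + 1 < B f (k - 1) := by
      have := (B_strictAnti hf) (show k - 1 < k by omega)
      omega
    have hkk' : k' = k - 1 :=
      row_unique hf h3 hge' hle' hik1 (by omega) hlo' hhi' (by omega) hfk1
    right
    simp only [boxOf, ← hk, ← hk', hkk']
    constructor
    · have hcast : ((k - 1 : ℕ) : ℤ) = (k : ℤ) - 1 := by
        have : 1 ≤ k := by omega
        push_cast [this]
        ring
      rw [hkk'] at hcol'
      rw [hcast] at hcol'
      omega
    · right
      omega

omit hf hg hij h1 h2 h3 h4 in
lemma adjBox_symm {x y : ℕ × ℕ} (h : AdjBox x y) : AdjBox y x := by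
  unfold AdjBox at *
  tauto

lemma conn {x y : ℕ × ℕ} (hx : InSkew f g x) (hy : InSkew f g y) :
    ∃ (n : ℕ) (c : ℕ → ℕ × ℕ), c 0 = x ∧ c n = y ∧
      (∀ m : ℕ, m ≤ n → InSkew f g (c m)) ∧
      (∀ m : ℕ, m < n → AdjBox (c m) (c (m + 1))) := by
  obtain ⟨hx1, hx2⟩ := ct_range hf hg hij h1 h2 h3 h4 hx
  obtain ⟨hy1, hy2⟩ := ct_range hf hg hij h1 h2 h3 h4 hy
  set t₁ := ct x with ht₁
  set t₂ := ct y with ht₂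
  rcases le_or_gt t₁ t₂ with hle | hlt
  · refine ⟨(t₂ - t₁).toNat, fun m => boxOf f i j (t₁ + m), ?_, ?_, ?_, ?_⟩
    · simpa using boxOf_eq_self hf hg hij h1 h2 h3 h4 hx
    · show boxOf f i j (t₁ + ((t₂ - t₁).toNat : ℤ)) = y
      have : ((t₂ - t₁).toNat : ℤ) = t₂ - t₁ := Int.toNat_of_nonneg (by omega)
      rw [this, show t₁ + (t₂ - t₁) = t₂ by ring]
      exact boxOf_eq_self hf hg hij h1 h2 h3 h4 hy
    · intro m hm
      have hm' : (m : ℤ) ≤ t₂ - t₁ := by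
        have : ((t₂ - t₁).toNat : ℤ) = t₂ - t₁ := Int.toNat_of_nonneg (by omega)
        omega
      exact boxOf_mem hf hg hij h1 h2 h3 h4 (by omega) (by omega)
    · intro m hm
      have hm' : (m : ℤ) + 1 ≤ t₂ - t₁ := by
        have : ((t₂ - t₁).toNat : ℤ) = t₂ - t₁ := Int.toNat_of_nonneg (by omega)
        omega
      have := adj_step hf hg hij h1 h2 h3 h4 (t := t₁ + m) (by omega) (by omega)
      show AdjBox (boxOf f i j (t₁ + (m : ℤ))) (boxOf f i j (t₁ + ((m + 1 : ℕ) : ℤ)))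
      have hcast : t₁ + ((m + 1 : ℕ) : ℤ) = t₁ + m + 1 := by push_cast; ring
      rwa [hcast]
  · refine ⟨(t₁ - t₂).toNat, fun m => boxOf f i j (t₁ - m), ?_, ?_, ?_, ?_⟩
    · simpa using boxOf_eq_self hf hg hij h1 h2 h3 h4 hx
    · show boxOf f i j (t₁ - ((t₁ - t₂).toNat : ℤ)) = y
      have : ((t₁ - t₂).toNat : ℤ) = t₁ - t₂ := Int.toNat_of_nonneg (by omega)
      rw [this, show t₁ - (t₁ - t₂) = t₂ by ring]
      exact boxOf_eq_self hf hg hij h1 h2 h3 h4 hy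
    · intro m hm
      have hm' : (m : ℤ) ≤ t₁ - t₂ := by
        have : ((t₁ - t₂).toNat : ℤ) = t₁ - t₂ := Int.toNat_of_nonneg (by omega)
        omega
      exact boxOf_mem hf hg hij h1 h2 h3 h4 (by omega) (by omega)
    · intro m hm
      have hm' : (m : ℤ) + 1 ≤ t₁ - t₂ := by
        have : ((t₁ - t₂).toNat : ℤ) = t₁ - t₂ := Int.toNat_of_nonneg (by omega)
        omega
      have := adj_step hf hg hij h1 h2 h3 h4 (t := t₁ - m - 1) (by omega) (by omega)
      show AdjBox (boxOf f i j (t₁ - (m : ℤ))) (boxOf f i j (t₁ - ((m + 1 : ℕ) : ℤ)))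
      have hcast : t₁ - ((m + 1 : ℕ) : ℤ) = t₁ - m - 1 := by push_cast; ring
      rw [hcast]
      apply adjBox_symm
      rwa [show t₁ - m - 1 + 1 = t₁ - m by ring] at this

lemma move_out : B g j ∉ XS f := by
  rintro ⟨k, hk⟩
  rcases le_or_gt k j with hle | hlt
  · have h5 : B f j ≤ B f k := B_anti hf hle
    have h6 : B g j < B f j := by
      have := h4 j hij (le_refl j)
      simp only [B]; omega
    omega
  · have h5 : B f k = B g k := by simp only [B, h2 k hlt]
    have h6 : B g k ≤ B g (j + 1) := B_anti hg hlt
    have h7 : B g (j + 1) < B g j := (B_strictAnti hg) (by omega)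
    omega

lemma move_set : XS g = insert (B g j) (XS f \ {B f i}) := by
  have hinjf := (B_strictAnti hf).injective
  ext y
  constructor
  · rintro ⟨k, rfl⟩
    rcases lt_or_ge k i with hki | hki
    · right
      refine ⟨⟨k, by simp only [B, h1 k hki]⟩, ?_⟩
      simp only [Set.mem_singleton_iff]
      rw [show B g k = B f k by simp only [B, h1 k hki]]
      intro hc
      exact absurd (hinjf hc) (by omega)
    · rcases lt_or_ge k j with hkj | hkj
      · right
        refine ⟨⟨k + 1, (Bg_eq h3 k hki hkj).symm⟩, ?_⟩
        simp only [Set.mem_singleton_iff]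
        rw [Bg_eq h3 k hki hkj]
        intro hc
        exact absurd (hinjf hc) (by omega)
      · rcases eq_or_lt_of_le hkj with heq | hlt
        · left; rw [heq]
        · right
          refine ⟨⟨k, by simp only [B, h2 k hlt]⟩, ?_⟩
          simp only [Set.mem_singleton_iff]
          rw [show B g k = B f k by simp only [B, h2 k hlt]]
          intro hc
          exact absurd (hinjf hc) (by omega)
  · rintro (rfl | ⟨⟨k, rfl⟩, hne⟩)
    · exact ⟨j, rfl⟩
    · simp only [Set.mem_singleton_iff] at hne
      have hki : k ≠ i := fun hc => hne (by rw [hc])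
      rcases lt_or_ge k i with h5 | h5
      · exact ⟨k, by simp only [B, h1 k h5]⟩
      · rcases le_or_gt k j with h6 | h6
        · have h7 : i ≤ k - 1 := by omega
          have h8 : k - 1 < j := by omega
          refine ⟨k - 1, ?_⟩
          rw [Bg_eq h3 (k - 1) h7 h8, Nat.sub_add_cancel (by omega)]
        · exact ⟨k, by simp only [B, h2 k h6]⟩


end Shared
/-! ## Analysis: a ribbon step is a beta-set move -/

lemma adj_row {x y : ℕ × ℕ} (h : AdjBox x y) :
    x.1 = y.1 ∨ (x.1 + 1 = y.1 ∧ x.2 = y.2) ∨ (y.1 + 1 = x.1 ∧ x.2 = y.2) := by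
  rcases h with ⟨h1, _⟩ | ⟨h1, h2⟩
  · exact Or.inl h1
  · rcases h2 with h2 | h2
    · exact Or.inr (Or.inl ⟨h2, h1⟩)
    · exact Or.inr (Or.inr ⟨h2, h1⟩)

lemma ivt {u : ℕ → ℕ} {n k : ℕ} (h0 : u 0 ≤ k) (hn : k ≤ u n)
    (hstep : ∀ m, m < n → u (m + 1) ≤ u m + 1) : ∃ m, m ≤ n ∧ u m = k := by
  classical
  have hex : ∃ m, m ≤ n ∧ k ≤ u m := ⟨n, le_refl n, hn⟩
  obtain ⟨hmn, hmk⟩ := Nat.find_spec hex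
  refine ⟨Nat.find hex, hmn, ?_⟩
  rcases Nat.eq_zero_or_pos (Nat.find hex) with h | h
  · rw [h] at hmk ⊢
    omega
  · have hmin := Nat.find_min hex (show Nat.find hex - 1 < Nat.find hex by omega)
    push_neg at hmin
    have h5 : u (Nat.find hex - 1) < k := hmin (by omega)
    have h6 := hstep (Nat.find hex - 1) (by omega)
    rw [Nat.sub_add_cancel h] at h6
    omega

lemma ribbon_analyze {r : ℕ} (hr : 1 ≤ r) {f g : ℕ → ℕ} (hf : IsPartitionFun f)
    (h : RibbonStep r f g) :
    ∃ x : ℤ, x ∈ XS f ∧ x - (r : ℤ) ∉ XS f ∧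
      XS g = insert (x - (r : ℤ)) (XS f \ {x}) := by
  classical
  obtain ⟨hg, hle, hcard, hconn, hcont⟩ := h
  have hpos : 0 < Nat.card {x : ℕ × ℕ // InSkew f g x} := by omega
  obtain ⟨⟨x0⟩, hfin⟩ := Nat.card_pos_iff.1 hpos
  set R : Set ℕ := {k | g k < f k} with hR
  have hbox : ∀ x : ℕ × ℕ, InSkew f g x → x.1 ∈ R := by
    rintro x ⟨ha, hb⟩
    exact lt_of_le_of_lt ha hb
  have hmemR : ∀ k, k ∈ R → InSkew f g (k, g k) := by
    intro k hk
    exact ⟨le_refl _, hk⟩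
  have hRne : R.Nonempty := ⟨x0.1.1, hbox _ x0.2⟩
  obtain ⟨n, hn⟩ := hf.2
  have hRbdd : BddAbove R := by
    refine ⟨n, fun k hk => ?_⟩
    by_contra hc
    push_neg at hc
    have := hn k (by omega)
    simp only [hR, Set.mem_setOf_eq] at hk
    omega
  set i := sInf R with hi'
  set j := sSup R with hj'
  have hi : i ∈ R := Nat.sInf_mem hRne
  have hj : j ∈ R := Nat.sSup_mem hRne hRbdd
  have hij : i ≤ j := Nat.sInf_le hj
  have h1 : ∀ k, k < i → g k = f k := by
    intro k hk
    have : k ∉ R := fun hc => absurd (Nat.sInf_le hc) (by omega)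
    simp only [hR, Set.mem_setOf_eq, not_lt] at this
    exact le_antisymm (hle k) this
  have h2 : ∀ k, j < k → g k = f k := by
    intro k hk
    have : k ∉ R := fun hc => absurd (le_csSup hRbdd hc) (by omega)
    simp only [hR, Set.mem_setOf_eq, not_lt] at this
    exact le_antisymm (hle k) this
  have h4 : ∀ k, i ≤ k → k ≤ j → k ∈ R := by
    intro k hk hk'
    obtain ⟨nn, c, hc0, hcn, hmem, hadj⟩ :=
      hconn (i, g i) (j, g j) (hmemR i hi) (hmemR j hj)
    have hstep : ∀ m, m < nn → (c (m + 1)).1 ≤ (c m).1 + 1 := by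
      intro m hm
      rcases adj_row (hadj m hm) with h | ⟨h, _⟩ | ⟨h, _⟩ <;> omega
    have h0 : (c 0).1 ≤ k := by rw [hc0]; exact hk
    have hnn : k ≤ (c nn).1 := by rw [hcn]; exact hk'
    obtain ⟨m, hmn, hmk⟩ := ivt (u := fun m => (c m).1) h0 hnn hstep
    have := hbox (c m) (hmem m hmn)
    rwa [hmk] at this
  have h4' : ∀ k, i ≤ k → k ≤ j → g k < f k := fun k hk hk' => h4 k hk hk'
  have h3 : ∀ k, i ≤ k → k < j → g k + 1 = f (k + 1) := by
    intro k hk hk'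
    have hkR : k ∈ R := h4 k hk (by omega)
    have hk1R : (k + 1) ∈ R := h4 (k + 1) (by omega) (by omega)
    have hmono : f (k + 1) ≤ f k := hf.1 k (k + 1) (by omega)
    have hgmono : g (k + 1) ≤ g k := hg.1 k (k + 1) (by omega)
    simp only [hR, Set.mem_setOf_eq] at hkR hk1R
    -- upper bound : f (k+1) ≤ g k + 1
    have hA : f (k + 1) ≤ g k + 1 := by
      by_contra hc
      push_neg at hc
      have h2f : 2 ≤ f (k + 1) := by omega
      have hp : InSkew f g (k, f (k + 1) - 2) := by
        constructor <;> simp only [] <;> omega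
      have hq : InSkew f g (k + 1, f (k + 1) - 1) := by
        constructor <;> simp only [] <;> omega
      have hcteq : (((f (k + 1) - 2 : ℕ) : ℤ)) - (k : ℤ) =
          (((f (k + 1) - 1 : ℕ) : ℤ)) - ((k + 1 : ℕ) : ℤ) := by omega
      have := hcont (k, f (k + 1) - 2) (k + 1, f (k + 1) - 1) hp hq hcteq
      have h9 := congrArg Prod.fst this
      simp at h9
    -- lower bound : g k < f (k+1)
    have hB : g k < f (k + 1) := by
      obtain ⟨nn, c, hc0, hcn, hmem, hadj⟩ :=
        hconn (k, g k) (k + 1, g (k + 1)) (hmemR k hkR) (hmemR (k + 1) hk1R)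
      have hex : ∃ m, m ≤ nn ∧ k + 1 ≤ (c m).1 := ⟨nn, le_refl nn, by rw [hcn]⟩
      obtain ⟨hmn, hmk⟩ := Nat.find_spec hex
      have hm0 : Nat.find hex ≠ 0 := by
        intro hc
        rw [hc, hc0] at hmk
        simp at hmk
      have hmin := Nat.find_min hex (show Nat.find hex - 1 < Nat.find hex by omega)
      push_neg at hmin
      have h5 : (c (Nat.find hex - 1)).1 ≤ k := by
        have := hmin (by omega)
        omega
      have hadj' : AdjBox (c (Nat.find hex - 1)) (c (Nat.find hex)) := by
        have := hadj (Nat.find hex - 1) (by omega)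
        rwa [Nat.sub_add_cancel (by omega)] at this
      rcases adj_row hadj' with heq | ⟨hrow, hcol⟩ | ⟨hrow, hcol⟩
      · omega
      · have hrow1 : (c (Nat.find hex - 1)).1 = k := by omega
        have hrow2 : (c (Nat.find hex)).1 = k + 1 := by omega
        obtain ⟨hp1, hp2⟩ := hmem (Nat.find hex - 1) (by omega)
        obtain ⟨hq1, hq2⟩ := hmem (Nat.find hex) hmn
        rw [hrow1] at hp1
        rw [hrow2] at hq2
        omega
      · omega
    omega
  -- apply the shared lemmas
  have hcs := card_skew hf hg hij h1 h2 h3 h4'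
  rw [hcard] at hcs
  have hjlt : B g j < B f j := by
    have := h4' j hij (le_refl j)
    simp only [B]
    omega
  have hr2 : B g j ≤ B f i := le_trans (le_of_lt hjlt) (B_anti hf hij)
  have hBgj : B g j = B f i - (r : ℤ) := by omega
  refine ⟨B f i, ⟨i, rfl⟩, ?_, ?_⟩
  · rw [← hBgj]
    exact move_out hf hg hij h1 h2 h3 h4'
  · rw [← hBgj]
    exact move_set hf hg hij h1 h2 h3 h4'

/-! ## Construction: a beta-set move can be realized by a ribbon step -/

lemma ribbon_construct {r : ℕ} (hr : 1 ≤ r) {f : ℕ → ℕ} (hf : IsPartitionFun f)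
    {x : ℤ} (hx : x ∈ XS f) (hxr : x - (r : ℤ) ∉ XS f) :
    ∃ g : ℕ → ℕ, RibbonStep r f g ∧ IsPartitionFun g ∧
      XS g = insert (x - (r : ℤ)) (XS f \ {x}) := by
  classical
  obtain ⟨i, hi⟩ := hx
  obtain ⟨n, hn⟩ := hf.2
  set bound : ℕ := f 0 + i + r + 1 with hbound
  set P : ℕ → Prop := fun k => x - (r : ℤ) < B f k with hP
  have hPi : P i := by
    simp only [hP, hi]
    omega
  have hPbound : ∀ k, P k → k < bound := by
    intro k hk
    simp only [hP, B] at hk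
    have h5 : f k ≤ f 0 := hf.1 0 k (by omega)
    have h6 : x = (f i : ℤ) - i := hi.symm
    have h7 : (0 : ℤ) ≤ f i := by positivity
    omega
  set j : ℕ := Nat.findGreatest P bound with hj'
  have hji : i ≤ j := Nat.le_findGreatest (by omega) hPi
  have hPj : P j := Nat.findGreatest_spec (P := P) (n := bound) (le_of_lt (hPbound i hPi)) hPi
  have hjb : j < bound := hPbound j hPj
  have hnotP : ¬ P (j + 1) :=
    Nat.findGreatest_is_greatest (P := P) (n := bound) (by omega) (by omega)
  simp only [hP, not_lt] at hnotP
  simp only [hP] at hPj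
  have hne : B f (j + 1) ≠ x - (r : ℤ) := fun hc => hxr ⟨j + 1, hc⟩
  have hlt1 : B f (j + 1) ≤ x - (r : ℤ) - 1 := by omega
  have hge0 : (0 : ℤ) ≤ x - (r : ℤ) + j := by
    have : -(((j : ℕ) : ℤ) + 1) ≤ B f (j + 1) := by
      simp only [B]
      push_cast
      omega
    omega
  set w : ℕ := (x - (r : ℤ) + j).toNat with hw'
  have hw : (w : ℤ) = x - (r : ℤ) + j := Int.toNat_of_nonneg hge0
  have hfj1 : f (j + 1) ≤ w := by
    simp only [B] at hlt1
    push_cast at hlt1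
    omega
  have hwfj : w < f j := by
    simp only [B] at hPj
    omega
  have hf1 : ∀ k, i ≤ k → k < j → 1 ≤ f (k + 1) := by
    intro k hk hk'
    have hgap := B_gap hf (show k + 1 ≤ j by omega)
    simp only [B] at hgap hPj
    push_cast at hgap
    omega
  set g : ℕ → ℕ := fun k =>
    if k < i then f k else if k < j then f (k + 1) - 1 else if k = j then w else f k
    with hgdef
  have hg_lt : ∀ k, k < i → g k = f k := by
    intro k hk
    simp only [hgdef]
    rw [if_pos hk]
  have hg_mid : ∀ k, i ≤ k → k < j → g k = f (k + 1) - 1 := by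
    intro k hk hk'
    simp only [hgdef]
    rw [if_neg (by omega), if_pos hk']
  have hg_j : g j = w := by
    simp only [hgdef]
    simp
    intro h
    omega
  have hg_gt : ∀ k, j < k → g k = f k := by
    intro k hk
    simp only [hgdef]
    rw [if_neg (by omega), if_neg (by omega), if_neg (by omega)]
  have hstep : ∀ k, g (k + 1) ≤ g k := by
    intro k
    have hfk : f (k + 1) ≤ f k := hf.1 k (k + 1) (by omega)
    have hfk2 : f (k + 1 + 1) ≤ f (k + 1) := hf.1 (k + 1) (k + 1 + 1) (by omega)
    by_cases hk1 : k + 1 < i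
    · rw [hg_lt k (by omega), hg_lt (k + 1) hk1]
      omega
    · by_cases hk2 : k + 1 < j
      · rw [hg_mid (k + 1) (by omega) hk2]
        by_cases hk3 : k < i
        · rw [hg_lt k hk3]
          omega
        · rw [hg_mid k (by omega) (by omega)]
          omega
      · by_cases hk4 : k + 1 = j
        · rw [hk4, hg_j]
          rw [hk4] at hfk
          by_cases hk5 : k < i
          · rw [hg_lt k hk5]
            omega
          · rw [hg_mid k (by omega) (by omega), hk4]
            omega
        · have hj1 : j < k + 1 := by omega
          rw [hg_gt (k + 1) hj1]
          by_cases hk6 : k = j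
          · rw [hk6, hg_j]
            omega
          · by_cases hk7 : k < i
            · rw [hg_lt k hk7]
              omega
            · rw [hg_gt k (by omega)]
              omega
  have hg_part : IsPartitionFun g := by
    constructor
    · exact fun a b hab => antitone_nat_of_succ_le hstep hab
    · refine ⟨max n (j + 1), fun k hk => ?_⟩
      rw [hg_gt k (by omega)]
      exact hn k (by omega)
  have hle : ∀ a, g a ≤ f a := by
    intro k
    have hfk : f (k + 1) ≤ f k := hf.1 k (k + 1) (by omega)
    by_cases hk1 : k < i
    · rw [hg_lt k hk1]
    · by_cases hk2 : k < j
      · rw [hg_mid k (by omega) hk2]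
        omega
      · by_cases hk3 : k = j
        · rw [hk3, hg_j]
          omega
        · rw [hg_gt k (by omega)]
  have h4 : ∀ k, i ≤ k → k ≤ j → g k < f k := by
    intro k hk hk'
    by_cases hk2 : k < j
    · rw [hg_mid k hk hk2]
      have := hf1 k hk hk2
      have hfk : f (k + 1) ≤ f k := hf.1 k (k + 1) (by omega)
      omega
    · have : k = j := by omega
      rw [this, hg_j]
      exact hwfj
  have h3 : ∀ k, i ≤ k → k < j → g k + 1 = f (k + 1) := by
    intro k hk hk'
    rw [hg_mid k hk hk']
    have := hf1 k hk hk'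
    omega
  have hBgj : B g j = x - (r : ℤ) := by
    simp only [B, hg_j]
    omega
  have hmove := move_set hf hg_part hji hg_lt hg_gt h3 h4
  have hout := move_out hf hg_part hji hg_lt hg_gt h3 h4
  refine ⟨g, ⟨hg_part, hle, ?_, ?_, ?_⟩, hg_part, ?_⟩
  · rw [card_skew hf hg_part hji hg_lt hg_gt h3 h4, hBgj, hi]
    omega
  · intro p q hp hq
    exact conn hf hg_part hji hg_lt hg_gt h3 h4 hp hq
  · intro p q hp hq hpq
    exact ct_inj hf hg_part hji hg_lt hg_gt h3 h4 hp hq hpq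
  · rw [hmove, hBgj, hi]

/-! ## The charge invariant -/

def ASet (r : ℕ) (X : Set ℤ) (m : ℤ) : Set ℤ := {y | y ∈ X ∧ m ≤ y ∧ (r : ℤ) ∣ y - m}

def CSet (r : ℕ) (X : Set ℤ) (m : ℤ) : Set ℤ := {y | y < m ∧ y ∉ X ∧ (r : ℤ) ∣ y - m}

noncomputable def Phi (r : ℕ) (X : Set ℤ) (m : ℤ) : ℤ :=
  ((ASet r X m).ncard : ℤ) - ((CSet r X m).ncard : ℤ)

lemma phi_move {r : ℕ} (hr : 1 ≤ r) {X : Set ℤ} {x : ℤ} (hx : x ∈ X)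
    (hxr : x - (r : ℤ) ∉ X) (m : ℤ)
    (hA : {y : ℤ | y ∈ X ∧ m ≤ y}.Finite) (hC : {y : ℤ | y < m ∧ y ∉ X}.Finite) :
    Phi r (insert (x - (r : ℤ)) (X \ {x})) m = Phi r X m := by
  classical
  have hd0 : (1 : ℤ) ≤ (r : ℤ) := by exact_mod_cast hr
  set d : ℤ := (r : ℤ) with hd
  set X' : Set ℤ := insert (x - d) (X \ {x}) with hX'
  have hAfin : (ASet r X m).Finite := hA.subset (fun y hy => ⟨hy.1, hy.2.1⟩)
  have hCfin : (CSet r X m).Finite := hC.subset (fun y hy => ⟨hy.1, hy.2.1⟩)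
  have hmemX' : ∀ y : ℤ, y ∈ X' ↔ (y = x - d ∨ (y ∈ X ∧ y ≠ x)) := by
    intro y
    simp [hX', Set.mem_insert_iff, Set.mem_diff]
  by_cases hdx : d ∣ x - m
  · have hdxd : d ∣ x - d - m := by
      have : x - d - m = (x - m) - d * 1 := by ring
      rw [this]
      exact dvd_sub hdx (Dvd.intro 1 rfl)
    by_cases hmx : m ≤ x - d
    · -- both x and x - d are ≥ m
      have hxA : x ∈ ASet r X m := ⟨hx, by omega, hdx⟩
      have hA2 : ASet r X' m = insert (x - d) (ASet r X m \ {x}) := by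
        ext y
        simp only [ASet, Set.mem_setOf_eq, hmemX' y, Set.mem_insert_iff, Set.mem_diff,
          Set.mem_singleton_iff]
        constructor
        · rintro ⟨h1 | ⟨h1, h1'⟩, h2, h3⟩
          · exact Or.inl h1
          · exact Or.inr ⟨⟨h1, h2, h3⟩, h1'⟩
        · rintro (rfl | ⟨⟨h1, h2, h3⟩, h4⟩)
          · exact ⟨Or.inl rfl, hmx, hdxd⟩
          · exact ⟨Or.inr ⟨h1, h4⟩, h2, h3⟩
      have hC2 : CSet r X' m = CSet r X m := by
        ext y
        simp only [CSet, Set.mem_setOf_eq, hmemX' y]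
        constructor
        · rintro ⟨h1, h2, h3⟩
          refine ⟨h1, fun hc => h2 (Or.inr ⟨hc, by omega⟩), h3⟩
        · rintro ⟨h1, h2, h3⟩
          refine ⟨h1, fun hc => ?_, h3⟩
          rcases hc with hc | ⟨hc, _⟩
          · omega
          · exact h2 hc
      have hxdnot : x - d ∉ ASet r X m \ {x} := fun h => hxr h.1.1
      have hncard1 : (ASet r X' m).ncard = (ASet r X m \ {x}).ncard + 1 := by
        rw [hA2]
        exact Set.ncard_insert_of_notMem hxdnot hAfin.diff
      have hncard2 : (ASet r X m \ {x}).ncard = (ASet r X m).ncard - 1 :=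
        Set.ncard_diff_singleton_of_mem hxA
      have hpos : 0 < (ASet r X m).ncard := (Set.ncard_pos hAfin).2 ⟨x, hxA⟩
      simp only [Phi, hC2, hncard1, hncard2]
      push_cast
      omega
    · by_cases hmx2 : m ≤ x
      · -- m = x
        have hmeq : m = x := by
          obtain ⟨t, ht⟩ := hdx
          have ht0 : t = 0 := by
            rcases lt_trichotomy t 0 with h | h | h
            · have : d * t < 0 := mul_neg_of_pos_of_neg (by omega) h
              omega
            · exact h
            · have : d * 1 ≤ d * t := by
                apply mul_le_mul_of_nonneg_left (by omega) (by omega)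
              omega
          rw [ht0, mul_zero] at ht
          omega
        have hxA : x ∈ ASet r X m := ⟨hx, by omega, hdx⟩
        have hxdC : x - d ∈ CSet r X m := ⟨by omega, hxr, hdxd⟩
        have hA2 : ASet r X' m = ASet r X m \ {x} := by
          ext y
          simp only [ASet, Set.mem_setOf_eq, hmemX' y, Set.mem_diff, Set.mem_singleton_iff]
          constructor
          · rintro ⟨h1 | ⟨h1, h1'⟩, h2, h3⟩
            · omega
            · exact ⟨⟨h1, h2, h3⟩, h1'⟩
          · rintro ⟨⟨h1, h2, h3⟩, h4⟩
            exact ⟨Or.inr ⟨h1, h4⟩, h2, h3⟩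
        have hC2 : CSet r X' m = CSet r X m \ {x - d} := by
          ext y
          simp only [CSet, Set.mem_setOf_eq, hmemX' y, Set.mem_diff, Set.mem_singleton_iff]
          constructor
          · rintro ⟨h1, h2, h3⟩
            have hy1 : y ≠ x - d := fun hc => h2 (Or.inl hc)
            refine ⟨⟨h1, fun hc => h2 (Or.inr ⟨hc, by omega⟩), h3⟩, hy1⟩
          · rintro ⟨⟨h1, h2, h3⟩, h4⟩
            refine ⟨h1, fun hc => ?_, h3⟩
            rcases hc with hc | ⟨hc, _⟩
            · exact h4 hc
            · exact h2 hc
        have hposA : 0 < (ASet r X m).ncard := (Set.ncard_pos hAfin).2 ⟨x, hxA⟩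
        have hposC : 0 < (CSet r X m).ncard := (Set.ncard_pos hCfin).2 ⟨x - d, hxdC⟩
        have hncard1 : (ASet r X' m).ncard = (ASet r X m).ncard - 1 := by
          rw [hA2]
          exact Set.ncard_diff_singleton_of_mem hxA
        have hncard2 : (CSet r X' m).ncard = (CSet r X m).ncard - 1 := by
          rw [hC2]
          exact Set.ncard_diff_singleton_of_mem hxdC
        simp only [Phi, hncard1, hncard2]
        push_cast
        omega
      · -- x < m
        push_neg at hmx2
        have hxdC : x - d ∈ CSet r X m := ⟨by omega, hxr, hdxd⟩
        have hxnC : x ∉ CSet r X m := fun h => h.2.1 hx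
        have hA2 : ASet r X' m = ASet r X m := by
          ext y
          simp only [ASet, Set.mem_setOf_eq, hmemX' y]
          constructor
          · rintro ⟨h1 | ⟨h1, h1'⟩, h2, h3⟩
            · omega
            · exact ⟨h1, h2, h3⟩
          · rintro ⟨h1, h2, h3⟩
            exact ⟨Or.inr ⟨h1, by omega⟩, h2, h3⟩
        have hC2 : CSet r X' m = insert x (CSet r X m \ {x - d}) := by
          ext y
          simp only [CSet, Set.mem_setOf_eq, hmemX' y, Set.mem_insert_iff, Set.mem_diff,
            Set.mem_singleton_iff]
          constructor
          · rintro ⟨h1, h2, h3⟩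
            have hy1 : y ≠ x - d := fun hc => h2 (Or.inl hc)
            by_cases hyx : y = x
            · exact Or.inl hyx
            · exact Or.inr ⟨⟨h1, fun hc => h2 (Or.inr ⟨hc, hyx⟩), h3⟩, hy1⟩
          · rintro (rfl | ⟨⟨h1, h2, h3⟩, h4⟩)
            · refine ⟨hmx2, fun hc => ?_, hdx⟩
              rcases hc with hc | ⟨_, hc⟩
              · omega
              · exact hc rfl
            · refine ⟨h1, fun hc => ?_, h3⟩
              rcases hc with hc | ⟨hc, _⟩
              · exact h4 hc
              · exact h2 hc
        have hxnot : x ∉ CSet r X m \ {x - d} := fun h => hxnC h.1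
        have hncard1 : (CSet r X' m).ncard = (CSet r X m \ {x - d}).ncard + 1 := by
          rw [hC2]
          exact Set.ncard_insert_of_notMem hxnot hCfin.diff
        have hncard2 : (CSet r X m \ {x - d}).ncard = (CSet r X m).ncard - 1 :=
          Set.ncard_diff_singleton_of_mem hxdC
        have hposC : 0 < (CSet r X m).ncard := (Set.ncard_pos hCfin).2 ⟨x - d, hxdC⟩
        simp only [Phi, hA2, hncard1, hncard2]
        push_cast
        omega
  · -- residue class not involved : both sets unchanged
    have hxne : ∀ y : ℤ, d ∣ y - m → y ≠ x := fun y hy he => hdx (he ▸ hy)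
    have hxdne : ∀ y : ℤ, d ∣ y - m → y ≠ x - d := by
      intro y hy he
      apply hdx
      have h5 : x - m = (y - m) + d * 1 := by rw [he] at hy ⊢; ring
      rw [h5]
      exact dvd_add hy (Dvd.intro 1 rfl)
    have hA2 : ASet r X' m = ASet r X m := by
      ext y
      simp only [ASet, Set.mem_setOf_eq, hmemX' y]
      constructor
      · rintro ⟨h1 | ⟨h1, h1'⟩, h2, h3⟩
        · exact absurd h1 (hxdne y h3)
        · exact ⟨h1, h2, h3⟩
      · rintro ⟨h1, h2, h3⟩
        exact ⟨Or.inr ⟨h1, hxne y h3⟩, h2, h3⟩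
    have hC2 : CSet r X' m = CSet r X m := by
      ext y
      simp only [CSet, Set.mem_setOf_eq, hmemX' y]
      constructor
      · rintro ⟨h1, h2, h3⟩
        refine ⟨h1, fun hc => h2 (Or.inr ⟨hc, hxne y h3⟩), h3⟩
      · rintro ⟨h1, h2, h3⟩
        refine ⟨h1, fun hc => ?_, h3⟩
        rcases hc with hc | ⟨hc, _⟩
        · exact absurd hc (hxdne y h3)
        · exact h2 hc
    simp only [Phi, hA2, hC2]

/-! ## Invariance along chains, cores, and the main theorem -/

lemma chain_inv {r : ℕ} (hr : 1 ≤ r) {f g : ℕ → ℕ} (hf : IsPartitionFun f)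
    (h : Relation.ReflTransGen (RibbonStep r) f g) :
    IsPartitionFun g ∧ ∀ m : ℤ, Phi r (XS g) m = Phi r (XS f) m := by
  induction h with
  | refl => exact ⟨hf, fun _ => rfl⟩
  | tail _ hstep ih =>
    obtain ⟨hb, hphi⟩ := ih
    obtain ⟨x, hx, hxr, hset⟩ := ribbon_analyze hr hb hstep
    refine ⟨hstep.1, fun m => ?_⟩
    rw [hset, phi_move hr hx hxr m (finA hb m) (finC hb m), hphi m]

lemma core_closed {r : ℕ} (hr : 1 ≤ r) {μ : ℕ → ℕ} (hμ : IsPartitionFun μ)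
    (hcore : ¬ ∃ g : ℕ → ℕ, RibbonStep r μ g) :
    ∀ x ∈ XS μ, x - (r : ℤ) ∈ XS μ := by
  intro x hx
  by_contra hc
  obtain ⟨g, hg, _⟩ := ribbon_construct hr hμ hx hc
  exact hcore ⟨g, hg⟩

lemma core_closed_iter {r : ℕ} (hr : 1 ≤ r) {μ : ℕ → ℕ} (hμ : IsPartitionFun μ)
    (hcore : ¬ ∃ g : ℕ → ℕ, RibbonStep r μ g) :
    ∀ (k : ℕ), ∀ x ∈ XS μ, x - (k : ℤ) * (r : ℤ) ∈ XS μ := by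
  intro k
  induction k with
  | zero => intro x hx; simpa using hx
  | succ k ih =>
    intro x hx
    have h5 := core_closed hr hμ hcore _ (ih x hx)
    have h6 : x - (k : ℤ) * r - r = x - ((k + 1 : ℕ) : ℤ) * r := by
      push_cast
      ring
    rwa [h6] at h5

lemma core_mem_iff {r : ℕ} (hr : 1 ≤ r) {μ : ℕ → ℕ} (hμ : IsPartitionFun μ)
    (hcore : ¬ ∃ g : ℕ → ℕ, RibbonStep r μ g) (m : ℤ) :
    m ∈ XS μ ↔ 0 < Phi r (XS μ) m := by
  have hAf : (ASet r (XS μ) m).Finite := (finA hμ m).subset fun y hy => ⟨hy.1, hy.2.1⟩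
  have hCf : (CSet r (XS μ) m).Finite := (finC hμ m).subset fun y hy => ⟨hy.1, hy.2.1⟩
  constructor
  · intro hm
    have hCempty : CSet r (XS μ) m = ∅ := by
      ext y
      simp only [CSet, Set.mem_setOf_eq, Set.mem_empty_iff_false, iff_false, not_and]
      rintro h1 h2 ⟨t, ht⟩
      have ht0 : t < 0 := by
        by_contra hc
        push_neg at hc
        have : (0 : ℤ) ≤ (r : ℤ) * t := mul_nonneg (by positivity) hc
        omega
      have hk : (((-t).toNat : ℤ)) = -t := Int.toNat_of_nonneg (by omega)
      have h5 := core_closed_iter hr hμ hcore (-t).toNat m hm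
      have h6 : m - (((-t).toNat : ℤ)) * (r : ℤ) = y := by
        rw [hk]
        linarith [ht]
      rw [h6] at h5
      exact h2 h5
    have hApos : 0 < (ASet r (XS μ) m).ncard :=
      (Set.ncard_pos hAf).2 ⟨m, hm, le_refl m, by simp⟩
    simp only [Phi, hCempty, Set.ncard_empty]
    omega
  · intro hphi
    by_contra hm
    have hAempty : ASet r (XS μ) m = ∅ := by
      ext y
      simp only [ASet, Set.mem_setOf_eq, Set.mem_empty_iff_false, iff_false, not_and]
      rintro h1 h2 ⟨t, ht⟩
      have ht0 : 0 ≤ t := by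
        by_contra hc
        push_neg at hc
        have h5 : (r : ℤ) * t ≤ (r : ℤ) * (-1) :=
          mul_le_mul_of_nonneg_left (by omega) (by positivity)
        have h6 : (r : ℤ) * (-1) = -(r : ℤ) := by ring
        omega
      have hk : ((t.toNat : ℤ)) = t := Int.toNat_of_nonneg ht0
      have h5 := core_closed_iter hr hμ hcore t.toNat y h1
      have h6 : y - ((t.toNat : ℤ)) * (r : ℤ) = m := by
        rw [hk]
        linarith [ht]
      rw [h6] at h5
      exact hm h5
    simp only [Phi, hAempty, Set.ncard_empty] at hphi
    omega
end Stmt5Aux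

/-- The `r`-core of a partition is well-defined: any two maximal
sequences of `r`-ribbon removals starting from the same partition `λ` terminate at the
same `r`-core partition. -/
theorem stmt5 (r : ℕ) (hr : 1 ≤ r) (f μ₁ μ₂ : ℕ → ℕ) (hf : IsPartitionFun f)
    (h1 : Relation.ReflTransGen (RibbonStep r) f μ₁)
    (h2 : Relation.ReflTransGen (RibbonStep r) f μ₂)
    (hcore1 : ¬ ∃ g : ℕ → ℕ, RibbonStep r μ₁ g)
    (hcore2 : ¬ ∃ g : ℕ → ℕ, RibbonStep r μ₂ g) :
    μ₁ = μ₂ := by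
  obtain ⟨hp1, hphi1⟩ := Stmt5Aux.chain_inv hr hf h1
  obtain ⟨hp2, hphi2⟩ := Stmt5Aux.chain_inv hr hf h2
  apply Stmt5Aux.XS_inj hp1 hp2
  ext m
  rw [Stmt5Aux.core_mem_iff hr hp1 hcore1 m, Stmt5Aux.core_mem_iff hr hp2 hcore2 m,
    hphi1 m, hphi2 m]
end

section
/- Let λ be a partition with κ(λ) = α and ℓ(λ) ≤ |N_•|, where N_• is compatible with α (i.e. N_i − N_{i−1} = c_{i−1} − c_i for all i ∈ ℤ/rℤ). Then for each i ∈ ℤ/rℤ, N_i equals the number of indices b with 1 ≤ b ≤ |N_•| such that b − λ_b ≡ i+1 (mod r), where λ_b = 0 for b > ℓ(λ). -/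
open Finset

/-- The number of nonzero parts of a partition. -/
noncomputable def partLen (f : ℕ → ℕ) : ℕ := Nat.card {i : ℕ // f i ≠ 0}

/-- The residue-`c` box count of a partition (boxes indexed from `0`). -/
noncomputable def residueCount (r : ℕ) (f : ℕ → ℕ) (c : ZMod r) : ℕ :=
  Nat.card {x : ℕ × ℕ // x.2 < f x.1 ∧ (((x.1 : ℤ) - (x.2 : ℤ) : ℤ) : ZMod r) = c}

/-- The map `κ(μ) = -∑_{boxes of μ} α_{residue}` into the `sl_r` root lattice, where
`α_i = ε_{i-1} - ε_i`: coordinatewise,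
`κ(μ) c = (# boxes of residue c) - (# boxes of residue c+1)`. -/
noncomputable def kappa (r : ℕ) (f : ℕ → ℕ) : ZMod r → ℤ :=
  fun c => (residueCount r f c : ℤ) - (residueCount r f (c + 1) : ℤ)

lemma parts_zero (f : ℕ → ℕ) (hf : IsPartitionFun f) (n : ℕ) (hlen : partLen f ≤ n) :
    ∀ i, n ≤ i → f i = 0 := by
  obtain ⟨m, hm⟩ := hf.2
  have hfin : {i : ℕ | f i ≠ 0}.Finite := by
    apply Set.Finite.subset (Set.finite_Iio m)
    intro i hi
    simp only [Set.mem_Iio]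
    by_contra h
    exact hi (hm i (by omega))
  suffices h : f n = 0 by
    intro i hi
    have := hf.1 n i hi
    omega
  by_contra hn
  have hsub : ↑(Finset.Iic n) ⊆ {i : ℕ | f i ≠ 0} := by
    intro i hi
    simp only [Finset.coe_Iic, Set.mem_Iic] at hi
    intro h0
    exact hn (Nat.le_zero.mp (h0 ▸ hf.1 i n hi))
  have hle := Set.ncard_le_ncard hsub hfin
  rw [Set.ncard_coe_finset, Nat.card_Iic] at hle
  have : partLen f = {i : ℕ | f i ≠ 0}.ncard := Nat.card_coe_set_eq _
  omega

section Aux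
variable (r : ℕ) [NeZero r]

noncomputable def cnt (a : ℤ) (k : ℕ) (c : ZMod r) : ℕ :=
  ((range k).filter (fun q : ℕ => (a : ZMod r) - (q : ZMod r) = c)).card

lemma cnt_succ (a : ℤ) (k : ℕ) (c : ZMod r) :
    cnt r a (k+1) c = cnt r a k c + (if (a : ZMod r) - (k : ZMod r) = c then 1 else 0) := by
  unfold cnt
  rw [range_add_one, filter_insert]
  split_ifs with h
  · rw [card_insert_of_notMem (by simp)]
  · rfl

lemma cnt_diff (a : ℤ) (k : ℕ) (c : ZMod r) :
    (cnt r a k c : ℤ) - (cnt r a k (c+1) : ℤ)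
      = (if (a : ZMod r) = c then 1 else 0)
        - (if (a : ZMod r) - (k : ZMod r) = c then 1 else 0) := by
  induction k with
  | zero => simp [cnt]
  | succ k ih =>
    rw [cnt_succ, cnt_succ]
    have key : ((a : ZMod r) - (k : ZMod r) = c + 1) ↔
        ((a : ZMod r) - ((k+1 : ℕ) : ZMod r) = c) := by
      push_cast
      constructor <;> intro h <;> linear_combination h
    push_cast
    push_cast at key ih
    simp only [← key]
    split_ifs at ih ⊢ <;> omega


lemma residueCount_eq (f : ℕ → ℕ) (hmono : ∀ i j : ℕ, i ≤ j → f j ≤ f i)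
    (n : ℕ) (hzero : ∀ b, n ≤ b → f b = 0) (c : ZMod r) :
    residueCount r f c = ∑ p ∈ range n, cnt r p (f p) c := by
  classical
  set K := f 0 + 1 with hK
  set P : ℕ × ℕ → Prop := fun x => x.2 < f x.1 ∧ (((x.1 : ℤ) - (x.2 : ℤ) : ℤ) : ZMod r) = c
    with hP
  set D : Finset (ℕ × ℕ) := (range n ×ˢ range K).filter P with hD
  have hset : {x : ℕ × ℕ | P x} = ↑D := by
    ext x
    simp only [hD, Set.mem_setOf_eq, coe_filter, mem_product, mem_range, Set.mem_setOf_eq]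
    constructor
    · intro hx
      refine ⟨⟨?_, ?_⟩, hx⟩
      · by_contra h
        have := hzero x.1 (by omega)
        omega
      · have := hmono 0 x.1 (Nat.zero_le _)
        omega
    · exact fun hx => hx.2
  have h1 : residueCount r f c = D.card := by
    have e1 : residueCount r f c = Set.ncard {x : ℕ × ℕ | P x} := by
      rw [← Nat.card_coe_set_eq]; rfl
    rw [e1, hset, Set.ncard_coe_finset]
  rw [h1, hD, card_filter, Finset.sum_product]
  refine Finset.sum_congr rfl fun p hp => ?_
  rw [← card_filter]
  have hfpK : f p < K := lt_of_le_of_lt (hmono 0 p (Nat.zero_le _)) (by omega)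
  have : (range K).filter (fun q => P (p, q)) = (range (f p)).filter
      (fun q : ℕ => ((p : ℕ) : ZMod r) - (q : ZMod r) = c) := by
    ext q
    simp only [hP, mem_filter, mem_range]
    push_cast
    constructor
    · rintro ⟨-, hq, hc⟩; exact ⟨hq, hc⟩
    · rintro ⟨hq, hc⟩; exact ⟨by omega, hq, hc⟩
  rw [this]
  simp [cnt]

lemma count_cast (N : ℕ) (c : ZMod r) (h : N % r = 0) :
    ((range N).filter (fun p : ℕ => (p : ZMod r) = c)).card = N / r := by
  have hr : 0 < r := Nat.pos_of_ne_zero (NeZero.ne r)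
  have hcount := Nat.count_modEq_card N hr c.val
  rw [Nat.count_eq_card_filter_range] at hcount
  have hcond : ∀ p : ℕ, ((p : ZMod r) = c) ↔ (p ≡ c.val [MOD r]) := by
    intro p
    rw [← ZMod.natCast_eq_natCast_iff, ZMod.natCast_zmod_val]
  rw [filter_congr (fun p _ => by rw [hcond p]), hcount, h,
    if_neg (by omega), add_zero]

end Aux


/-- Let `λ` be a partition with `κ(λ) = α` and `ℓ(λ) ≤ |N|`, where
`N : ZMod r → ℕ` is compatible with `α` (i.e. `N i - N (i-1) = α (i-1) - α i` for all
`i ∈ ℤ/rℤ`).  Then for each `i ∈ ℤ/rℤ`, `N i` equals the number of indices `b` with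
`1 ≤ b ≤ |N|` such that `b - λ_b ≡ i + 1 (mod r)`, where `λ_b = 0` for `b > ℓ(λ)`. -/
theorem stmt8 (r : ℕ) [NeZero r] (N : ZMod r → ℕ) (f : ℕ → ℕ)
    (hf : IsPartitionFun f)
    (hcompat : ∀ i : ZMod r,
      (N i : ℤ) - (N (i - 1) : ℤ) = kappa r f (i - 1) - kappa r f i)
    (hlen : partLen f ≤ ∑ j : ZMod r, N j) :
    ∀ i : ZMod r,
      N i = ((Finset.Icc 1 (∑ j : ZMod r, N j)).filter
        (fun b : ℕ => (((b : ℤ) - (f (b - 1) : ℤ) : ℤ) : ZMod r) = i + 1)).card := by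
  intro i
  set n := ∑ j : ZMod r, N j with hn
  have hzero : ∀ b, n ≤ b → f b = 0 := parts_zero f hf n hlen
  -- kappa in terms of counts over rows
  have hkappa : ∀ c : ZMod r, kappa r f c =
      (((range n).filter (fun p : ℕ => (p : ZMod r) = c)).card : ℤ)
      - (((range n).filter (fun p : ℕ => (p : ZMod r) - (f p : ZMod r) = c)).card : ℤ) := by
    intro c
    show (residueCount r f c : ℤ) - (residueCount r f (c+1) : ℤ) = _
    rw [residueCount_eq r f hf.1 n hzero c, residueCount_eq r f hf.1 n hzero (c+1)]
    push_cast
    rw [← Finset.sum_sub_distrib]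
    have hterm : ∀ p ∈ range n, ((cnt r p (f p) c : ℤ) - (cnt r p (f p) (c+1) : ℤ))
        = (if (p : ZMod r) = c then (1:ℤ) else 0)
          - (if (p : ZMod r) - ((f p : ℕ) : ZMod r) = c then 1 else 0) := by
      intro p _
      rw [cnt_diff]
      simp only [Int.cast_natCast]
    rw [Finset.sum_congr rfl hterm, Finset.sum_sub_distrib, Finset.sum_boole,
      Finset.sum_boole]
  -- sum of kappa is zero
  have hsum_kappa : ∑ c : ZMod r, kappa r f c = 0 := by
    show ∑ c : ZMod r, ((residueCount r f c : ℤ) - (residueCount r f (c + 1) : ℤ)) = 0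
    rw [Finset.sum_sub_distrib, sub_eq_zero]
    exact Fintype.sum_equiv (Equiv.subRight (1 : ZMod r))
      (fun c => (residueCount r f c : ℤ)) (fun c => (residueCount r f (c + 1) : ℤ))
      (fun c => by simp)
  -- the quantity N c + kappa c is constant
  have hg : ∀ c : ZMod r, (N c : ℤ) + kappa r f c = (N 0 : ℤ) + kappa r f 0 := by
    have step : ∀ c : ZMod r, (N c : ℤ) + kappa r f c
        = (N (c - 1) : ℤ) + kappa r f (c - 1) := fun c => by linarith [hcompat c]
    have natver : ∀ k : ℕ, (N (k : ZMod r) : ℤ) + kappa r f (k : ZMod r)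
        = (N 0 : ℤ) + kappa r f 0 := by
      intro k
      induction k with
      | zero => simp
      | succ k ih =>
        rw [show ((k + 1 : ℕ) : ZMod r) = (k : ZMod r) + 1 by push_cast; ring,
          step ((k : ZMod r) + 1), add_sub_cancel_right]
        exact ih
    intro c
    have := natver c.val
    rwa [ZMod.natCast_zmod_val] at this
  -- n = r * K
  have hK : (n : ℤ) = r * ((N 0 : ℤ) + kappa r f 0) := by
    have e1 : (n : ℤ) = ∑ c : ZMod r, ((N c : ℤ) + kappa r f c) := by
      rw [Finset.sum_add_distrib, hsum_kappa, add_zero, hn]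
      push_cast
      rfl
    rw [e1, Finset.sum_congr rfl (fun c _ => hg c), Finset.sum_const, Finset.card_univ,
      ZMod.card, nsmul_eq_mul]
  have hrn : n % r = 0 := by
    have hd : (r : ℤ) ∣ (n : ℤ) := ⟨_, hK⟩
    have := Int.natCast_dvd_natCast.mp hd
    omega
  have hC : ∀ c : ZMod r,
      ((((range n).filter (fun p : ℕ => (p : ZMod r) = c)).card : ℤ))
        = (N 0 : ℤ) + kappa r f 0 := by
    intro c
    rw [count_cast r n c hrn]
    have hr0 : (r : ℤ) ≠ 0 := by exact_mod_cast (NeZero.ne r)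
    have hdvd : r ∣ n := by omega
    have : ((n / r : ℕ) : ℤ) * r = (n : ℤ) := by exact_mod_cast Nat.div_mul_cancel hdvd
    have h2 : ((n / r : ℕ) : ℤ) * r = ((N 0 : ℤ) + kappa r f 0) * r := by
      rw [this, hK]; ring
    exact mul_right_cancel₀ hr0 h2
  have hM : (((range n).filter (fun p : ℕ => (p : ZMod r) - (f p : ZMod r) = i)).card : ℤ)
      = (N i : ℤ) := by
    have h1 := hkappa i
    have h2 := hg i
    have h3 := hC i
    linarith
  -- reindex b = p + 1
  have hbij : ((Finset.Icc 1 n).filter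
        (fun b : ℕ => (((b : ℤ) - (f (b - 1) : ℤ) : ℤ) : ZMod r) = i + 1)).card
      = ((range n).filter (fun p : ℕ => (p : ZMod r) - (f p : ZMod r) = i)).card := by
    apply Finset.card_bij (fun b _ => b - 1)
    · intro b hb
      simp only [mem_filter, mem_Icc] at hb
      obtain ⟨⟨hb1, hb2⟩, hcond⟩ := hb
      simp only [mem_filter, mem_range]
      constructor
      · omega
      · have hcast : (((b - 1 : ℕ) : ℤ)) = (b : ℤ) - 1 := by
          push_cast [hb1]; ring
        push_cast at hcond
        have : ((b - 1 : ℕ) : ZMod r) = (b : ZMod r) - 1 := by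
          rw [show ((b - 1 : ℕ) : ZMod r) = (((b - 1 : ℕ) : ℤ) : ZMod r) by push_cast; rfl,
            hcast]
          push_cast
          ring
        rw [this]
        linear_combination hcond
    · intro b hb b' hb' hbe
      simp only [mem_filter, mem_Icc] at hb hb'
      omega
    · intro p hp
      simp only [mem_filter, mem_range] at hp
      obtain ⟨hpn, hcond⟩ := hp
      refine ⟨p + 1, ?_, by omega⟩
      simp only [mem_filter, mem_Icc]
      refine ⟨⟨by omega, by omega⟩, ?_⟩
      have : p + 1 - 1 = p := by omega
      rw [this]
      push_cast
      linear_combination hcond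
  rw [hbij]
  exact_mod_cast hM.symm
end

section
/- For a partition λ, the generating identity (1/(1−t^{r})) · Σ_{i=0}^{r−1} t^{i+1} · (Σ_{■∈A_{p−i}(λ)} χ_■ − Σ_{■∈R_{p−i}(λ)} qt·χ_■) = Σ_{b ≥ 1, b−λ_b ≡ p+1 (mod r)} q^{λ_b} t^{b} holds as an identity of formal power series in t with coefficients in ℤ[q], where χ_{(a,b)} = q^{a−1} t^{b−1}. -/
/-- `∑_{■ ∈ A_c(λ)} χ_■` : the sum of the characters `χ_{(a,b)} = q^{a-1} t^{b-1}` of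
the addable boxes of `λ` of color `c` (the addable box in row `b` is `(λ_b + 1, b)`,
with color `b - a mod r`), as a power series in `t` with coefficients in `ℤ[q]`
(with `q = Polynomial.X`).  All addable boxes lie in rows `b ≤ ℓ(λ) + 1`. -/
noncomputable def addableSum (r : ℕ) [NeZero r] (f : ℕ → ℕ) (c : ZMod r) :
    PowerSeries (Polynomial ℤ) :=
  ∑ b ∈ Finset.Icc 1 (partLen f + 1),
    if (b = 1 ∨ f (b - 1) < f (b - 2)) ∧
        ((((b : ℤ) - (f (b - 1) : ℤ) - 1) : ℤ) : ZMod r) = c then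
      PowerSeries.C (Polynomial.X ^ (f (b - 1))) * PowerSeries.X ^ (b - 1)
    else 0

/-- `∑_{■ ∈ R_c(λ)} χ_■` : the sum of the characters of the removable boxes of `λ` of
color `c` (the removable box in row `b` is `(λ_b, b)`). -/
noncomputable def removableSum (r : ℕ) [NeZero r] (f : ℕ → ℕ) (c : ZMod r) :
    PowerSeries (Polynomial ℤ) :=
  ∑ b ∈ Finset.Icc 1 (partLen f),
    if f b < f (b - 1) ∧ ((((b : ℤ) - (f (b - 1) : ℤ)) : ℤ) : ZMod r) = c then
      PowerSeries.C (Polynomial.X ^ (f (b - 1) - 1)) * PowerSeries.X ^ (b - 1)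
    else 0

/-- The right-hand side `∑_{b ≥ 1, b - λ_b ≡ p+1 (mod r)} q^{λ_b} t^b` as a formal
power series in `t` with coefficients in `ℤ[q]` (each power of `t` occurs for at most
one `b`). -/
noncomputable def rowSum (r : ℕ) [NeZero r] (f : ℕ → ℕ) (p : ZMod r) :
    PowerSeries (Polynomial ℤ) :=
  PowerSeries.mk fun m =>
    if 1 ≤ m ∧ ((((m : ℤ) - (f (m - 1) : ℤ)) : ℤ) : ZMod r) = p + 1 then
      Polynomial.X ^ (f (m - 1))
    else 0

lemma partLen_zero (f : ℕ → ℕ) (hf : IsPartitionFun f) {k : ℕ} (hk : partLen f ≤ k) :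
    f k = 0 := by
  obtain ⟨hmono, n, hn⟩ := hf
  by_contra h
  have hsub : Set.Iic k ⊆ {i : ℕ | f i ≠ 0} := by
    intro i hi
    simp only [Set.mem_Iic] at hi
    have := hmono i k hi
    simp only [Set.mem_setOf_eq]
    omega
  have hfin : {i : ℕ | f i ≠ 0}.Finite := by
    apply Set.Finite.subset (Set.finite_Iio n)
    intro i hi
    simp only [Set.mem_setOf_eq] at hi
    simp only [Set.mem_Iio]
    by_contra h'
    exact hi (hn i (by omega))
  have h1 : (Set.Iic k).ncard ≤ {i : ℕ | f i ≠ 0}.ncard := Set.ncard_le_ncard hsub hfin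
  have h2 : (Set.Iic k).ncard = k + 1 := by
    rw [← Finset.coe_Iic, Set.ncard_coe_finset, Nat.card_Iic]
  have h3 : {i : ℕ | f i ≠ 0}.ncard = partLen f := by
    rw [partLen, ← Nat.card_coe_set_eq]
    rfl
  omega

noncomputable def Gaux (r : ℕ) [NeZero r] (p : ZMod r) (f : ℕ → ℕ) (m : ℕ) (b : ℕ) :
    Polynomial ℤ :=
  if 1 ≤ b ∧ ((((m : ℤ) - (f (b - 1) : ℤ)) : ℤ) : ZMod r) = p + 1 then
    Polynomial.X ^ (f (b - 1))
  else 0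

lemma coeffA (r : ℕ) [NeZero r] (f : ℕ → ℕ) (c : ZMod r) (m i : ℕ) :
    (PowerSeries.coeff m)
      ((PowerSeries.X : PowerSeries (Polynomial ℤ)) ^ (i + 1) * addableSum r f c) =
    if (m - i) ∈ Finset.Icc 1 (partLen f + 1) ∧ (i + 1 ≤ m ∧
        ((m - i = 1 ∨ f (m - i - 1) < f (m - i - 2)) ∧
        ((((m - i : ℕ) : ℤ) - (f (m - i - 1) : ℤ) - 1 : ℤ) : ZMod r) = c))
    then Polynomial.X ^ (f (m - i - 1)) else 0 := by
  rw [addableSum, Finset.mul_sum, map_sum]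
  have hterm : ∀ b ∈ Finset.Icc 1 (partLen f + 1),
      (PowerSeries.coeff m)
        ((PowerSeries.X : PowerSeries (Polynomial ℤ)) ^ (i + 1) *
          if (b = 1 ∨ f (b - 1) < f (b - 2)) ∧
              ((((b : ℤ) - (f (b - 1) : ℤ) - 1) : ℤ) : ZMod r) = c then
            PowerSeries.C (Polynomial.X ^ (f (b - 1))) * PowerSeries.X ^ (b - 1)
          else 0)
      = if b = m - i then
          (if i + 1 ≤ m ∧
              ((m - i = 1 ∨ f (m - i - 1) < f (m - i - 2)) ∧
              ((((m - i : ℕ) : ℤ) - (f (m - i - 1) : ℤ) - 1 : ℤ) : ZMod r) = c)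
           then Polynomial.X ^ (f (m - i - 1)) else 0)
        else 0 := by
    intro b hb
    simp only [Finset.mem_Icc] at hb
    simp only [mul_ite, mul_zero]
    rw [apply_ite (PowerSeries.coeff m), map_zero]
    have e : (PowerSeries.X : PowerSeries (Polynomial ℤ)) ^ (i + 1) *
        (PowerSeries.C (Polynomial.X ^ (f (b - 1))) *
          PowerSeries.X ^ (b - 1))
        = PowerSeries.C (Polynomial.X ^ (f (b - 1))) *
          PowerSeries.X ^ (b - 1 + (i + 1)) := by
      rw [pow_add]; ring
    rw [e, PowerSeries.coeff_C_mul, PowerSeries.coeff_X_pow]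
    by_cases hbe : b = m - i
    · subst hbe
      have h1m : i + 1 ≤ m := by omega
      have h2 : m = m - i - 1 + (i + 1) := by omega
      rw [if_pos h2, mul_one]
      simp [h1m]
    · rw [if_neg hbe]
      have hne : ¬ (m = b - 1 + (i + 1)) := by omega
      rw [if_neg hne, mul_zero, ite_self]
  rw [Finset.sum_congr rfl hterm,
    Finset.sum_ite_eq' (Finset.Icc 1 (partLen f + 1)) (m - i)]
  by_cases h : (m - i) ∈ Finset.Icc 1 (partLen f + 1) <;> simp [h]

lemma coeffR (r : ℕ) [NeZero r] (f : ℕ → ℕ) (c : ZMod r) (m i : ℕ) :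
    (PowerSeries.coeff m)
      ((PowerSeries.X : PowerSeries (Polynomial ℤ)) ^ (i + 1) *
        (PowerSeries.C Polynomial.X * PowerSeries.X * removableSum r f c)) =
    if (m - i - 1) ∈ Finset.Icc 1 (partLen f) ∧ (i + 2 ≤ m ∧
        (f (m - i - 1) < f (m - i - 1 - 1) ∧
        ((((m - i - 1 : ℕ) : ℤ) - (f (m - i - 1 - 1) : ℤ) : ℤ) : ZMod r) = c))
    then Polynomial.X ^ (f (m - i - 1 - 1) - 1) * Polynomial.X else 0 := by
  rw [removableSum, Finset.mul_sum, Finset.mul_sum, map_sum]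
  have hterm : ∀ b ∈ Finset.Icc 1 (partLen f),
      (PowerSeries.coeff m)
        ((PowerSeries.X : PowerSeries (Polynomial ℤ)) ^ (i + 1) *
          (PowerSeries.C Polynomial.X * PowerSeries.X *
            if f b < f (b - 1) ∧ ((((b : ℤ) - (f (b - 1) : ℤ)) : ℤ) : ZMod r) = c then
              PowerSeries.C (Polynomial.X ^ (f (b - 1) - 1)) * PowerSeries.X ^ (b - 1)
            else 0))
      = if b = m - i - 1 then
          (if i + 2 ≤ m ∧
              (f (m - i - 1) < f (m - i - 1 - 1) ∧
              ((((m - i - 1 : ℕ) : ℤ) - (f (m - i - 1 - 1) : ℤ) : ℤ) : ZMod r) = c)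
           then Polynomial.X ^ (f (m - i - 1 - 1) - 1) * Polynomial.X else 0)
        else 0 := by
    intro b hb
    simp only [Finset.mem_Icc] at hb
    simp only [mul_ite, mul_zero]
    rw [apply_ite (PowerSeries.coeff m), map_zero]
    have e : (PowerSeries.X : PowerSeries (Polynomial ℤ)) ^ (i + 1) *
        (PowerSeries.C Polynomial.X * PowerSeries.X *
          (PowerSeries.C (Polynomial.X ^ (f (b - 1) - 1)) *
            PowerSeries.X ^ (b - 1)))
        = PowerSeries.C (Polynomial.X ^ (f (b - 1) - 1) * Polynomial.X) *
          PowerSeries.X ^ (b - 1 + (i + 2)) := by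
      rw [map_mul, pow_add]; ring
    rw [e, PowerSeries.coeff_C_mul, PowerSeries.coeff_X_pow]
    by_cases hbe : b = m - i - 1
    · subst hbe
      have h1m : i + 2 ≤ m := by omega
      have h2 : m = m - i - 1 - 1 + (i + 2) := by omega
      rw [if_pos h2, mul_one]
      simp [h1m]
    · rw [if_neg hbe]
      have hne : ¬ (m = b - 1 + (i + 2)) := by omega
      rw [if_neg hne, mul_zero, ite_self]
  rw [Finset.sum_congr rfl hterm,
    Finset.sum_ite_eq' (Finset.Icc 1 (partLen f)) (m - i - 1)]
  by_cases h : (m - i - 1) ∈ Finset.Icc 1 (partLen f) <;> simp [h]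

lemma perI (r : ℕ) [NeZero r] (p : ZMod r) (f : ℕ → ℕ)
    (hmono : ∀ i j : ℕ, i ≤ j → f j ≤ f i) (hL : ∀ k, partLen f ≤ k → f k = 0)
    (m i : ℕ) :
    (PowerSeries.coeff m)
      ((PowerSeries.X : PowerSeries (Polynomial ℤ)) ^ (i + 1) *
        (addableSum r f (p - (i : ZMod r)) -
          PowerSeries.C Polynomial.X * PowerSeries.X * removableSum r f (p - (i : ZMod r))))
    = Gaux r p f m (m - i) - Gaux r p f m (m - i - 1) := by
  rw [mul_sub, map_sub, coeffA, coeffR]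
  by_cases hm0 : m ≤ i
  · have e0 : m - i = 0 := by omega
    simp [Gaux, e0, Finset.mem_Icc, show ¬ (i + 1 ≤ m) from by omega]
  push_neg at hm0
  by_cases hm1 : m = i + 1
  · have e3 : m - i - 1 - 1 = 0 := by omega
    have e2 : m - i - 2 = 0 := by omega
    have e2' : m - i - 1 = 0 := by omega
    have e1 : m - i = 1 := by omega
    rw [e3, e2, e2', e1]
    have hRn : ¬ ((0 : ℕ) ∈ Finset.Icc 1 (partLen f) ∧ (i + 2 ≤ m ∧
        (f 0 < f 0 ∧ ((((0 : ℕ) : ℤ) - (f 0 : ℤ) : ℤ) : ZMod r) = p - (i : ZMod r)))) := by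
      rintro ⟨hmem0, -⟩
      simp at hmem0
    have hG0 : Gaux r p f m 0 = 0 := by simp [Gaux]
    rw [if_neg hRn, hG0, sub_zero, sub_zero]
    simp only [Gaux]
    have hmem : (1 : ℕ) ∈ Finset.Icc 1 (partLen f + 1) := by
      rw [Finset.mem_Icc]; omega
    have hm' : ((m : ℤ) : ZMod r) = (i : ZMod r) + 1 := by
      rw [show (m : ℤ) = (i : ℤ) + 1 from by omega]; push_cast; ring
    have hcol : ((((1 : ℕ) : ℤ) - (f 0 : ℤ) - 1 : ℤ) : ZMod r) = p - (i : ZMod r) ↔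
        ((((m : ℤ) - (f (1 - 1) : ℤ)) : ℤ) : ZMod r) = p + 1 := by
      push_cast
      push_cast at hm'
      constructor <;> intro h
      · linear_combination h + hm'
      · linear_combination h - hm'
    refine if_congr ?_ rfl rfl
    constructor
    · rintro ⟨-, -, -, hc⟩; exact ⟨le_refl 1, hcol.1 hc⟩
    · rintro ⟨-, hc⟩; exact ⟨hmem, by omega, Or.inl trivial, hcol.2 hc⟩
  -- main case : i + 2 ≤ m
  have hm2 : i + 2 ≤ m := by omega
  have eF : m - i - 1 - 1 = m - i - 2 := by omega
  rw [eF]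
  have hcast1 : ((m - i : ℕ) : ℤ) = (m : ℤ) - (i : ℤ) := by omega
  have hcast2 : ((m - i - 1 : ℕ) : ℤ) = (m : ℤ) - (i : ℤ) - 1 := by omega
  have hcol1 : ((((m - i : ℕ) : ℤ) - (f (m - i - 1) : ℤ) - 1 : ℤ) : ZMod r)
        = p - (i : ZMod r) ↔
      ((((m : ℤ) - (f (m - i - 1) : ℤ)) : ℤ) : ZMod r) = p + 1 := by
    rw [hcast1]
    push_cast
    constructor <;> intro h <;> linear_combination h
  have hcol2 : ((((m - i - 1 : ℕ) : ℤ) - (f (m - i - 2) : ℤ) : ℤ) : ZMod r)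
        = p - (i : ZMod r) ↔
      ((((m : ℤ) - (f (m - i - 2) : ℤ)) : ℤ) : ZMod r) = p + 1 := by
    rw [hcast2]
    push_cast
    constructor <;> intro h <;> linear_combination h
  by_cases hlt : f (m - i - 1) < f (m - i - 2)
  · have hfz : ¬ (partLen f ≤ m - i - 2) := fun h => by have := hL _ h; omega
    have hA : (if (m - i) ∈ Finset.Icc 1 (partLen f + 1) ∧ (i + 1 ≤ m ∧
          ((m - i = 1 ∨ f (m - i - 1) < f (m - i - 2)) ∧
          ((((m - i : ℕ) : ℤ) - (f (m - i - 1) : ℤ) - 1 : ℤ) : ZMod r) = p - (i : ZMod r)))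
        then Polynomial.X ^ (f (m - i - 1)) else 0) = Gaux r p f m (m - i) := by
      simp only [Gaux]
      refine if_congr ?_ rfl rfl
      rw [Finset.mem_Icc]
      constructor
      · rintro ⟨⟨h1, -⟩, -, -, hc⟩; exact ⟨h1, hcol1.1 hc⟩
      · rintro ⟨h1, hc⟩
        exact ⟨⟨h1, by omega⟩, by omega, Or.inr hlt, hcol1.2 hc⟩
    have hR : (if (m - i - 1) ∈ Finset.Icc 1 (partLen f) ∧ (i + 2 ≤ m ∧
          (f (m - i - 1) < f (m - i - 2) ∧
          ((((m - i - 1 : ℕ) : ℤ) - (f (m - i - 2) : ℤ) : ℤ) : ZMod r) = p - (i : ZMod r)))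
        then Polynomial.X ^ (f (m - i - 2) - 1) * Polynomial.X else 0)
        = Gaux r p f m (m - i - 1) := by
      simp only [Gaux, eF]
      refine if_congr ?_ ?_ rfl
      · rw [Finset.mem_Icc]
        constructor
        · rintro ⟨⟨h1, -⟩, -, -, hc⟩; exact ⟨h1, hcol2.1 hc⟩
        · rintro ⟨h1, hc⟩
          exact ⟨⟨h1, by omega⟩, by omega, hlt, hcol2.2 hc⟩
      · rw [← pow_succ]
        congr 1
        omega
    rw [hA, hR]
  · have hle := hmono (m - i - 2) (m - i - 1) (by omega)
    have hfe : f (m - i - 2) = f (m - i - 1) := by omega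
    rw [if_neg (by rintro ⟨-, -, h | h, -⟩ <;> omega),
      if_neg (by rintro ⟨-, -, h, -⟩; exact hlt h)]
    simp only [Gaux, eF, hfe]
    have hz : (if (1 ≤ m - i ∧
          ((((m : ℤ) - (f (m - i - 1) : ℤ)) : ℤ) : ZMod r) = p + 1)
        then Polynomial.X ^ (f (m - i - 1)) else (0 : Polynomial ℤ))
        = (if (1 ≤ m - i - 1 ∧
          ((((m : ℤ) - (f (m - i - 1) : ℤ)) : ℤ) : ZMod r) = p + 1)
        then Polynomial.X ^ (f (m - i - 1)) else 0) :=
      if_congr (and_congr (iff_of_true (by omega) (by omega)) Iff.rfl) rfl rfl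
    rw [hz, sub_self, sub_self]

/-- For a partition `λ`, the generating identity
`(1/(1-t^r)) ∑_{i=0}^{r-1} t^{i+1} (∑_{■∈A_{p-i}(λ)} χ_■ - ∑_{■∈R_{p-i}(λ)} q t χ_■)
  = ∑_{b ≥ 1, b-λ_b ≡ p+1 (mod r)} q^{λ_b} t^b`
holds as an identity of formal power series in `t` with coefficients in `ℤ[q]`,
where `χ_{(a,b)} = q^{a-1} t^{b-1}`.  (Both sides have been multiplied by the unit
power series `1 - t^r`, interpreting `1/(1-t^r)` as a geometric series.) -/
theorem stmt13 (r : ℕ) [NeZero r] (p : ZMod r) (f : ℕ → ℕ) (hf : IsPartitionFun f) :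
    ∑ i ∈ Finset.range r,
      (PowerSeries.X : PowerSeries (Polynomial ℤ)) ^ (i + 1) *
        (addableSum r f (p - (i : ZMod r)) -
          PowerSeries.C Polynomial.X * PowerSeries.X * removableSum r f (p - (i : ZMod r)))
    = (1 - PowerSeries.X ^ r) * rowSum r f p := by
  have hmono := hf.1
  have hL : ∀ k, partLen f ≤ k → f k = 0 := fun k hk => partLen_zero f hf hk
  ext m
  rw [map_sum, Finset.sum_congr rfl (fun i _ => perI r p f hmono hL m i)]
  simp only [Nat.sub_sub]
  rw [Finset.sum_range_sub' (fun i => Gaux r p f m (m - i)) r]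
  simp only [Nat.sub_zero]
  rw [sub_mul, one_mul, map_sub,
    mul_comm ((PowerSeries.X : PowerSeries (Polynomial ℤ)) ^ r) (rowSum r f p),
    PowerSeries.coeff_mul_X_pow']
  have hGm : Gaux r p f m m = (PowerSeries.coeff m) (rowSum r f p) := by
    simp only [Gaux, rowSum, PowerSeries.coeff_mk]
  rw [hGm]
  by_cases hrm : r ≤ m
  · rw [if_pos hrm]
    have hGr : Gaux r p f m (m - r)
        = (PowerSeries.coeff (m - r)) (rowSum r f p) := by
      simp only [Gaux, rowSum, PowerSeries.coeff_mk]
      refine if_congr ?_ rfl rfl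
      refine and_congr Iff.rfl ?_
      rw [show ((m - r : ℕ) : ℤ) = (m : ℤ) - (r : ℤ) from by omega]
      push_cast
      rw [ZMod.natCast_self]
      constructor <;> intro h <;> linear_combination h
    rw [hGr]
  · rw [if_neg hrm]
    have h0 : m - r = 0 := by omega
    rw [h0]
    simp [Gaux]
end

section
/- In the twisted group algebra 𝔽{P} of the sl_r weight lattice, the commutation sign satisfies: e^{α_1} e^{α_2} ⋯ e^{α_{r−1}} = (−1)^{(r−2)(r−3)/2} e^{rΛ_{r−1}} e^{−(r−2)α_{r−1}} ⋯ e^{−2α_3} e^{−α_2}. -/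
section aux
variable {G : Type*} [Group G]

lemma my_swap_zpow {ε x y : G} (hε : ε * ε = 1)
    (hεx : Commute ε x) (h : x * y = ε * (y * x)) (m : ℤ) :
    x ^ m * y = ε ^ m * (y * x ^ m) := by
  have hinv : x⁻¹ * y = ε * (y * x⁻¹) := by
    have h2 : y * x⁻¹ = ε * (x⁻¹ * y) := by
      calc y * x⁻¹ = x⁻¹ * (x * y) * x⁻¹ := by group
        _ = x⁻¹ * (ε * (y * x)) * x⁻¹ := by rw [h]
        _ = (x⁻¹ * ε) * (y * (x * x⁻¹)) := by group
        _ = (ε * x⁻¹) * (y * (x * x⁻¹)) := by rw [hεx.inv_right.eq]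
        _ = ε * (x⁻¹ * y) := by group
    calc x⁻¹ * y = ε * (ε * (x⁻¹ * y)) := by rw [← mul_assoc, hε, one_mul]
      _ = ε * (y * x⁻¹) := by rw [← h2]
  induction m using Int.induction_on with
  | zero => simp
  | succ n ih =>
      calc x ^ ((n : ℤ) + 1) * y = x ^ (n : ℤ) * (x * y) := by group
        _ = x ^ (n : ℤ) * (ε * (y * x)) := by rw [h]
        _ = (ε * x ^ (n : ℤ)) * ((y * x)) := by
              rw [← mul_assoc, ← (hεx.zpow_right (n : ℤ)).eq]
        _ = ε * ((x ^ (n : ℤ) * y) * x) := by group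
        _ = ε * ((ε ^ (n : ℤ) * (y * x ^ (n : ℤ))) * x) := by rw [ih]
        _ = ε ^ ((n : ℤ) + 1) * (y * x ^ ((n : ℤ) + 1)) := by group
  | pred n ih =>
      have hkey : ε ^ (1 - (n : ℤ)) = ε ^ (-(n : ℤ) - 1) := by
        rw [show (1 : ℤ) - n = (-(n : ℤ) - 1) + 2 by ring, zpow_add,
          show (2 : ℤ) = 1 + 1 from rfl, zpow_add, zpow_one, ← mul_assoc, mul_assoc _ ε ε,
          hε, mul_one]
      calc x ^ (-(n : ℤ) - 1) * y = x ^ (-(n : ℤ)) * (x⁻¹ * y) := by group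
        _ = x ^ (-(n : ℤ)) * (ε * (y * x⁻¹)) := by rw [hinv]
        _ = (ε * x ^ (-(n : ℤ))) * (y * x⁻¹) := by
              rw [← mul_assoc, ← (hεx.zpow_right (-(n : ℤ))).eq]
        _ = ε * ((x ^ (-(n : ℤ)) * y) * x⁻¹) := by group
        _ = ε * ((ε ^ (-(n : ℤ)) * (y * x ^ (-(n : ℤ)))) * x⁻¹) := by rw [ih]
        _ = ε ^ (1 - (n : ℤ)) * (y * x ^ (-(n : ℤ) - 1)) := by group
        _ = ε ^ (-(n : ℤ) - 1) * (y * x ^ (-(n : ℤ) - 1)) := by rw [hkey]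

lemma my_swap_zpow_zpow {ε x y : G} (hε : ε * ε = 1)
    (hεx : Commute ε x) (hεy : Commute ε y) (h : x * y = ε * (y * x)) (m p : ℤ) :
    x ^ m * y ^ p = ε ^ (m * p) * (y ^ p * x ^ m) := by
  have h1 := my_swap_zpow hε hεx h m
  have h2 : y * x ^ m = ε ^ (-m) * (x ^ m * y) := by
    rw [h1, ← mul_assoc, ← zpow_add, neg_add_cancel, zpow_zero, one_mul]
  have hε' : ε ^ (-m) * ε ^ (-m) = 1 := by
    rw [← zpow_add, show -m + -m = 2 * (-m) by ring, zpow_mul,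
      show (2 : ℤ) = 1 + 1 from rfl, zpow_add, zpow_one, hε, one_zpow]
  have h3 := my_swap_zpow hε' (hεy.zpow_left (-m)).symm.symm h2 p
  -- h3 : y ^ p * x ^ m = (ε ^ (-m)) ^ p * (x ^ m * y ^ p)
  have h4 : ε ^ (m * p) * (y ^ p * x ^ m) = x ^ m * y ^ p := by
    rw [h3, ← zpow_mul, ← mul_assoc, ← zpow_add,
      show m * p + -m * p = 0 by ring, zpow_zero, one_mul]
  exact h4.symm

lemma my_commute_of_swap {ε x y : G} (hε : ε * ε = 1)
    (hεx : Commute ε x) (hεy : Commute ε y) (h : x * y = ε * (y * x)) (m p : ℤ)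
    (hone : ε ^ (m * p) = 1) : Commute (x ^ m) (y ^ p) := by
  have := my_swap_zpow_zpow hε hεx hεy h m p
  rw [hone, one_mul] at this
  exact this

end aux


section ringaux
variable {R : Type} [Ring R]

lemma my_neg_one_sq : (-1 : Rˣ) * (-1 : Rˣ) = 1 := by simp

lemma my_neg_one_zpow_even {e : ℤ} (he : Even e) : (-1 : Rˣ) ^ e = 1 := by
  obtain ⟨t, rfl⟩ := he
  rw [show t + t = 2 * t by ring, zpow_mul, show (2 : ℤ) = 1 + 1 from rfl,
    zpow_add, zpow_one, my_neg_one_sq, one_zpow]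

lemma my_neg_one_zpow_natCast (m : ℤ) (k : ℕ) (h : (2 : ℤ) ∣ (m - k)) :
    (-1 : Rˣ) ^ m = (-1 : Rˣ) ^ k := by
  have h1 : (-1 : Rˣ) ^ m = (-1 : Rˣ) ^ (m - k) * (-1 : Rˣ) ^ (k : ℤ) := by
    rw [← zpow_add]
    congr 1
    ring
  rw [h1, my_neg_one_zpow_even (Int.even_iff.mpr (by omega)), one_mul, zpow_natCast]

end ringaux

lemma my_key {R : Type} [Ring R] (b : ℕ → Rˣ) :
    ∀ n : ℕ, (∀ i j : ℕ, i < n → j < n →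
      b i * b j = (if i = j + 1 ∨ j = i + 1 then (-1 : Rˣ) else 1) * (b j * b i)) →
    ((List.range n).map (fun k => b k ^ (-((k : ℤ) + 2)))).prod *
        ((List.range n).map b).prod
      = (-1 : Rˣ) ^ (n * (n - 1) / 2) *
        ((List.range n).map (fun k => b (n - 1 - k) ^ (-((n : ℤ) - (k : ℤ))))).prod := by
  intro n
  induction n with
  | zero => intro _; simp
  | succ n ih =>
    intro h
    have IH := ih (fun i j hi hj => h i j (by omega) (by omega))
    have hb : ∀ i j, i < n + 1 → j < n + 1 → ¬(i = j + 1 ∨ j = i + 1) →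
        Commute (b i) (b j) := by
      intro i j hi hj hij
      have := h i j hi hj
      rwa [if_neg hij, one_mul] at this
    -- names
    set A := ((List.range n).map (fun k => b k ^ (-((k : ℤ) + 2)))).prod with hA
    set B := ((List.range n).map b).prod with hB
    set C := ((List.range n).map (fun k => b (n - 1 - k) ^ (-((n : ℤ) - (k : ℤ))))).prod with hC
    set X := b n ^ (-((n : ℤ) + 2)) with hX
    set Y := b n ^ (-((n : ℤ) + 1)) with hY
    -- Step 1 : X * B = (-1)^n * (B * X)
    have hXB : X * B = (-1 : Rˣ) ^ n * (B * X) := by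
      cases n with
      | zero => simp [hB, hX]
      | succ m =>
        have hcP : Commute X (((List.range m).map b).prod) := by
          apply Commute.list_prod_right
          intro z hz
          simp only [List.mem_map, List.mem_range] at hz
          obtain ⟨k, hk, rfl⟩ := hz
          exact (hb (m + 1) k (by omega) (by omega) (by omega)).zpow_left _
        have hadj : b (m + 1) * b m = (-1 : Rˣ) * (b m * b (m + 1)) := by
          have := h (m + 1) m (by omega) (by omega)
          rwa [if_pos (Or.inl rfl)] at this
        have hswap := my_swap_zpow my_neg_one_sq (Commute.neg_one_left _) hadj
          (-(((m + 1 : ℕ) : ℤ) + 2))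
        have hsgn : (-1 : Rˣ) ^ (-(((m + 1 : ℕ) : ℤ) + 2)) = (-1 : Rˣ) ^ (m + 1 : ℕ) :=
          my_neg_one_zpow_natCast _ _ (by push_cast; omega)
        rw [hsgn] at hswap
        rw [hB, List.range_succ, List.map_append, List.prod_append, List.map_singleton,
          List.prod_singleton]
        set P := ((List.range m).map b).prod
        calc X * (P * b m) = (X * P) * b m := (mul_assoc _ _ _).symm
          _ = (P * X) * b m := by rw [hcP.eq]
          _ = P * (X * b m) := mul_assoc _ _ _
          _ = P * ((-1 : Rˣ) ^ (m + 1 : ℕ) * (b m * X)) := by rw [hX, hswap]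
          _ = (P * (-1 : Rˣ) ^ (m + 1 : ℕ)) * (b m * X) := (mul_assoc _ _ _).symm
          _ = ((-1 : Rˣ) ^ (m + 1 : ℕ) * P) * (b m * X) := by
                rw [← ((Commute.neg_one_left P).pow_left (m + 1)).eq]
          _ = (-1 : Rˣ) ^ (m + 1 : ℕ) * ((P * b m) * X) := by
                rw [mul_assoc, mul_assoc]
    -- Step 2 : Y commutes with C
    have hYC : Commute Y C := by
      rw [hC]
      apply Commute.list_prod_right
      intro z hz
      simp only [List.mem_map, List.mem_range] at hz
      obtain ⟨k, hk, rfl⟩ := hz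
      rcases Nat.eq_zero_or_pos k with hk0 | hk1
      · subst hk0
        have hadj : b n * b (n - 1) = (-1 : Rˣ) * (b (n - 1) * b n) := by
          have := h n (n - 1) (by omega) (by omega)
          rwa [if_pos (Or.inl (by omega))] at this
        have he : Even ((-((n : ℤ) + 1)) * (-((n : ℤ) - (0 : ℕ)))) := by
          have h2 := Int.even_mul_succ_self (n : ℤ)
          have : (-((n : ℤ) + 1)) * (-((n : ℤ) - (0 : ℕ))) = (n : ℤ) * ((n : ℤ) + 1) := by
            push_cast; ring
          rw [this]
          exact h2
        exact my_commute_of_swap my_neg_one_sq (Commute.neg_one_left _)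
          (Commute.neg_one_left _) hadj _ _ (my_neg_one_zpow_even he)
      · have hcb : Commute (b n) (b (n - 1 - k)) :=
          hb n (n - 1 - k) (by omega) (by omega) (by omega)
        exact hcb.zpow_zpow _ _
    -- Step 3 : X * b n = Y
    have hXbn : X * b n = Y := by
      rw [hX, hY]
      calc b n ^ (-((n : ℤ) + 2)) * b n
          = b n ^ (-((n : ℤ) + 2)) * b n ^ (1 : ℤ) := by rw [zpow_one]
        _ = b n ^ (-((n : ℤ) + 2) + 1) := by rw [← zpow_add]
        _ = b n ^ (-((n : ℤ) + 1)) := by congr 1 <;> ring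
    -- Step 4 : RHS list restructure
    have hRHS : ((List.range (n + 1)).map
          (fun k => b (n + 1 - 1 - k) ^ (-(((n + 1 : ℕ) : ℤ) - (k : ℤ))))).prod = Y * C := by
      rw [List.range_succ_eq_map, List.map_cons, List.prod_cons, List.map_map]
      have hhead : b (n + 1 - 1 - 0) ^ (-(((n + 1 : ℕ) : ℤ) - ((0 : ℕ) : ℤ)))
          = b n ^ (-((n : ℤ) + 1)) := by
        have h1 : n + 1 - 1 - 0 = n := by omega
        have h2 : (-(((n + 1 : ℕ) : ℤ) - ((0 : ℕ) : ℤ))) = -((n : ℤ) + 1) := by push_cast; ring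
        rw [h1, h2]
      have htail : List.map ((fun k => b (n + 1 - 1 - k) ^ (-(((n + 1 : ℕ) : ℤ) - (k : ℤ))))
            ∘ Nat.succ) (List.range n)
          = List.map (fun k => b (n - 1 - k) ^ (-((n : ℤ) - (k : ℤ)))) (List.range n) := by
        apply List.map_congr_left
        intro k hk
        simp only [List.mem_range] at hk
        simp only [Function.comp_apply]
        have h1 : n + 1 - 1 - Nat.succ k = n - 1 - k := by omega
        have h2 : (-(((n + 1 : ℕ) : ℤ) - ((Nat.succ k : ℕ) : ℤ))) = -((n : ℤ) - (k : ℤ)) := by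
          push_cast; ring
        rw [h1, h2]
      rw [hhead, htail, hY, hC]
    -- assemble
    have hsplitA : ((List.range (n + 1)).map (fun k => b k ^ (-((k : ℤ) + 2)))).prod = A * X := by
      rw [List.range_succ, List.map_append, List.prod_append, List.map_singleton,
        List.prod_singleton]
    have hsplitB : ((List.range (n + 1)).map b).prod = B * b n := by
      rw [List.range_succ, List.map_append, List.prod_append, List.map_singleton,
        List.prod_singleton]
    have hexp : n + n * (n - 1) / 2 = (n + 1) * (n + 1 - 1) / 2 := by
      have h2 : (n + 1) * (n + 1 - 1) = n * (n - 1) + 2 * n := by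
        cases n with
        | zero => rfl
        | succ m => simp only [Nat.add_sub_cancel]; ring
      have h3 : n * (n - 1) % 2 = 0 := by
        cases n with
        | zero => rfl
        | succ m =>
          have : Even ((m + 1) * m) := by
            have := Nat.even_mul_succ_self m
            rwa [mul_comm] at this
          simpa [Nat.even_iff] using this
      omega
    calc ((List.range (n + 1)).map (fun k => b k ^ (-((k : ℤ) + 2)))).prod *
          ((List.range (n + 1)).map b).prod
        = (A * X) * (B * b n) := by rw [hsplitA, hsplitB]
      _ = A * (X * B) * b n := by simp only [mul_assoc]
      _ = A * ((-1 : Rˣ) ^ n * (B * X)) * b n := by rw [hXB]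
      _ = (A * (-1 : Rˣ) ^ n) * (B * (X * b n)) := by simp only [mul_assoc]
      _ = ((-1 : Rˣ) ^ n * A) * (B * (X * b n)) := by
            rw [← ((Commute.neg_one_left A).pow_left n).eq]
      _ = (-1 : Rˣ) ^ n * ((A * B) * (X * b n)) := by simp only [mul_assoc]
      _ = (-1 : Rˣ) ^ n * (((-1 : Rˣ) ^ (n * (n - 1) / 2) * C) * Y) := by rw [IH, hXbn]
      _ = ((-1 : Rˣ) ^ n * (-1 : Rˣ) ^ (n * (n - 1) / 2)) * (C * Y) := by
            simp only [mul_assoc]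
      _ = (-1 : Rˣ) ^ (n + n * (n - 1) / 2) * (Y * C) := by rw [← pow_add, ← hYC.eq]
      _ = (-1 : Rˣ) ^ ((n + 1) * (n + 1 - 1) / 2) *
          ((List.range (n + 1)).map
            (fun k => b (n + 1 - 1 - k) ^ (-(((n + 1 : ℕ) : ℤ) - (k : ℤ))))).prod := by
            rw [hexp, hRHS]

/-- In the twisted group algebra `𝔽{P}` of the `sl_r` weight lattice
(equivalently, in any ring containing invertible elements `a j = e^{α_j}` for
`2 ≤ j ≤ r-1` and `L = e^{Λ_{r-1}}` satisfying the defining commutation relations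
`e^{α_i} e^{α_j} = (-1)^{(h_i, α_j)} e^{α_j} e^{α_i}` and
`e^{α_i} e^{Λ_{r-1}} = (-1)^{δ_{i,r-1}} e^{Λ_{r-1}} e^{α_i}`), with
`e^{α_1} = e^{-2α_2} e^{-3α_3} ⋯ e^{-(r-1)α_{r-1}} e^{rΛ_{r-1}}`, the commutation sign
satisfies
`e^{α_1} e^{α_2} ⋯ e^{α_{r-1}}
  = (-1)^{(r-2)(r-3)/2} e^{rΛ_{r-1}} e^{-(r-2)α_{r-1}} ⋯ e^{-2α_3} e^{-α_2}`. -/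
theorem stmt17 (R : Type) [Ring R] (r : ℕ) (hr : 3 ≤ r) (a : ℕ → Rˣ) (L : Rˣ)
    (hcomm : ∀ i j : ℕ, 2 ≤ i → i ≤ r - 1 → 2 ≤ j → j ≤ r - 1 →
      a i * a j = (if i = j + 1 ∨ j = i + 1 then (-1 : Rˣ) else 1) * (a j * a i))
    (hL : ∀ i : ℕ, 2 ≤ i → i ≤ r - 1 →
      a i * L = (if i = r - 1 then (-1 : Rˣ) else 1) * (L * a i)) :
    (((List.range (r - 2)).map (fun k => a (k + 2) ^ (-((k : ℤ) + 2)))).prod * L ^ (r : ℤ)) *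
        ((List.range (r - 2)).map (fun k => a (k + 2))).prod
      = (-1 : Rˣ) ^ ((r - 2) * (r - 3) / 2) *
        (L ^ (r : ℤ) *
          ((List.range (r - 2)).map (fun k => a (r - 1 - k) ^ (-((r : ℤ) - 2 - (k : ℤ))))).prod) := by
  set n := r - 2 with hn
  -- instantiate the key lemma
  have h' : ∀ i j : ℕ, i < n → j < n →
      a (i + 2) * a (j + 2) = (if i = j + 1 ∨ j = i + 1 then (-1 : Rˣ) else 1) *
        (a (j + 2) * a (i + 2)) := by
    intro i j hi hj
    have := hcomm (i + 2) (j + 2) (by omega) (by omega) (by omega) (by omega)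
    rwa [if_congr (show (i + 2 = j + 2 + 1 ∨ j + 2 = i + 2 + 1) ↔ (i = j + 1 ∨ j = i + 1)
      by omega) rfl rfl] at this
  have hKey : ((List.range n).map (fun k => a (k + 2) ^ (-((k : ℤ) + 2)))).prod *
        ((List.range n).map (fun k => a (k + 2))).prod
      = (-1 : Rˣ) ^ (n * (n - 1) / 2) *
        ((List.range n).map (fun k => a ((n - 1 - k) + 2) ^ (-((n : ℤ) - (k : ℤ))))).prod :=
    my_key (fun k => a (k + 2)) n h'
  set A := ((List.range n).map (fun k => a (k + 2) ^ (-((k : ℤ) + 2)))).prod with hA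
  set B := ((List.range n).map (fun k => a (k + 2))).prod with hB
  -- L^r commutes with A
  have hLA : Commute (L ^ (r : ℤ)) A := by
    rw [hA]
    apply Commute.list_prod_right
    intro z hz
    simp only [List.mem_map, List.mem_range] at hz
    obtain ⟨k, hk, rfl⟩ := hz
    by_cases hk1 : k + 2 = r - 1
    · have hrel := hL (k + 2) (by omega) (by omega)
      rw [if_pos hk1] at hrel
      have he : Even ((-((k : ℤ) + 2)) * (r : ℤ)) := by
        have hk' : (k : ℤ) + 2 = (r : ℤ) - 1 := by omega
        have h2 := Int.even_mul_succ_self ((r : ℤ) - 1)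
        have h3 : (-((r : ℤ) - 1)) * (r : ℤ) = -(((r : ℤ) - 1) * (((r : ℤ) - 1) + 1)) := by ring
        rw [hk', h3]
        exact h2.neg
      exact (my_commute_of_swap my_neg_one_sq (Commute.neg_one_left _)
        (Commute.neg_one_left _) hrel _ _ (my_neg_one_zpow_even he)).symm
    · have hrel := hL (k + 2) (by omega) (by omega)
      rw [if_neg hk1, one_mul] at hrel
      exact ((show Commute (a (k + 2)) L from hrel).zpow_zpow _ _).symm
  -- the two RHS lists agree
  have hlist : ((List.range n).map (fun k => a ((n - 1 - k) + 2) ^ (-((n : ℤ) - (k : ℤ))))).prod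
      = ((List.range n).map (fun k => a (r - 1 - k) ^ (-((r : ℤ) - 2 - (k : ℤ))))).prod := by
    congr 1
    apply List.map_congr_left
    intro k hk
    simp only [List.mem_range] at hk
    have h1 : (n - 1 - k) + 2 = r - 1 - k := by omega
    have h2 : (-((n : ℤ) - (k : ℤ))) = -((r : ℤ) - 2 - (k : ℤ)) := by omega
    rw [h1, h2]
  have hsgn : (-1 : Rˣ) ^ (n * (n - 1) / 2) = (-1 : Rˣ) ^ ((r - 2) * (r - 3) / 2) := by
    congr 1 <;> omega
  calc (A * L ^ (r : ℤ)) * B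
      = (L ^ (r : ℤ) * A) * B := by rw [hLA.eq]
    _ = L ^ (r : ℤ) * (A * B) := mul_assoc _ _ _
    _ = L ^ (r : ℤ) * ((-1 : Rˣ) ^ (n * (n - 1) / 2) *
        ((List.range n).map (fun k => a ((n - 1 - k) + 2) ^ (-((n : ℤ) - (k : ℤ))))).prod) := by
        rw [hKey]
    _ = (L ^ (r : ℤ) * (-1 : Rˣ) ^ (n * (n - 1) / 2)) *
        ((List.range n).map (fun k => a ((n - 1 - k) + 2) ^ (-((n : ℤ) - (k : ℤ))))).prod := by
        simp only [mul_assoc]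
    _ = ((-1 : Rˣ) ^ (n * (n - 1) / 2) * L ^ (r : ℤ)) *
        ((List.range n).map (fun k => a ((n - 1 - k) + 2) ^ (-((n : ℤ) - (k : ℤ))))).prod := by
        rw [← ((Commute.neg_one_left (L ^ (r : ℤ))).pow_left _).eq]
    _ = (-1 : Rˣ) ^ ((r - 2) * (r - 3) / 2) *
        (L ^ (r : ℤ) *
          ((List.range n).map (fun k => a (r - 1 - k) ^ (-((r : ℤ) - 2 - (k : ℤ))))).prod) := by
        rw [hsgn, ← hlist, mul_assoc]
end
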